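/- arXiv:2307.09305 — 10 statements merged into one kernel-verified Lean document; each statement's English description precedes it below -/
import Mathlib

section
/- Let κ > 0, a ∈ ℝ, let (u, λ) solve the ergodic equation E(κ, a) with density m, and let (v, λ′) solve the linearized equation L(κ, a) along (u, λ). Then λ′ = −κ ∫_{−π}^{π} V(y) m(y) dy. -/
open Real

/-- `V x = 1 - cos x`. -/
noncomputable def Vfun (x : ℝ) : ℝ := 1 - Real.cos x

/-- The pair `(u, lam)` solves the ergodic equation `E(κ, a)`:
`u` is `C²` and even, `u 0 = 0`, `u'(±π) = 0`, and
`-u'' + (1/2)|u'|² + lam = κ V(x)(1 - a)` on `[-π, π]`. -/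
def SolvesE (κ a : ℝ) (u : ℝ → ℝ) (lam : ℝ) : Prop :=
  ContDiff ℝ 2 u ∧ (∀ x : ℝ, u (-x) = u x) ∧ u 0 = 0 ∧
  deriv u π = 0 ∧ deriv u (-π) = 0 ∧
  ∀ x ∈ Set.Icc (-π) π,
    -(deriv (deriv u) x) + (1 / 2) * (deriv u x) ^ 2 + lam = κ * Vfun x * (1 - a)

/-- The density associated to `u`. -/
noncomputable def dens (u : ℝ → ℝ) (x : ℝ) : ℝ :=
  Real.exp (-u x) / ∫ y in (-π)..π, Real.exp (-u y)

/-- The pair `(v, lam')` solves the linearized equation `L(κ, a)` along `(u, lam)`: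
`v` is `C²`, `v 0 = 0`, `v'(±π) = 0`, and `-v'' + u' v' + lam' = -κ V(x)` on `[-π, π]`. -/
def SolvesL (κ : ℝ) (u v : ℝ → ℝ) (lam' : ℝ) : Prop :=
  ContDiff ℝ 2 v ∧ v 0 = 0 ∧ deriv v π = 0 ∧ deriv v (-π) = 0 ∧
  ∀ x ∈ Set.Icc (-π) π,
    -(deriv (deriv v) x) + deriv u x * deriv v x + lam' = -(κ * Vfun x)

/-- The ergodic constant of the linearized equation equals `-κ ∫ V m`. -/
theorem linearized_constant (κ a : ℝ) (hκ : 0 < κ) (u v : ℝ → ℝ) (lam lam' : ℝ)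
    (hu : SolvesE κ a u lam) (hv : SolvesL κ u v lam') :
    lam' = -κ * ∫ y in (-π)..π, Vfun y * dens u y := by
  obtain ⟨hu2, -, -, -, -, -⟩ := hu
  obtain ⟨hv2, -, hvp, hvm, heq⟩ := hv
  have hpi : (-π : ℝ) ≤ π := by linarith [Real.pi_pos]
  -- differentiability facts
  have hud : Differentiable ℝ u := hu2.differentiable (by norm_num)
  have hvd : Differentiable ℝ v := hv2.differentiable (by norm_num)
  have hv2' : ContDiff ℝ (1 + 1) v := by norm_num at hv2 ⊢; exact hv2
  have hdv1 : ContDiff ℝ 1 (deriv v) := (contDiff_succ_iff_deriv.mp hv2').2.2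
  have hdvd : Differentiable ℝ (deriv v) := hdv1.differentiable (by norm_num)
  -- the function g = exp(-u) * v'
  set g : ℝ → ℝ := fun x => Real.exp (-u x) * deriv v x with hg
  have key : ∀ x ∈ Set.uIcc (-π) π,
      HasDerivAt g (Real.exp (-u x) * (lam' + κ * Vfun x)) x := by
    intro x hx
    rw [Set.uIcc_of_le hpi] at hx
    have h1 : HasDerivAt (fun y => Real.exp (-u y)) (Real.exp (-u x) * -(deriv u x)) x :=
      ((hud x).hasDerivAt.neg).exp
    have h2 : HasDerivAt (deriv v) (deriv (deriv v) x) x := (hdvd x).hasDerivAt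
    have hd : HasDerivAt (fun y => Real.exp (-u y) * deriv v y)
        (Real.exp (-u x) * -(deriv u x) * deriv v x + Real.exp (-u x) * deriv (deriv v) x) x :=
      h1.mul h2
    have hvpp : deriv (deriv v) x = deriv u x * deriv v x + lam' + κ * Vfun x := by
      have := heq x hx; linarith
    convert hd using 1
    rw [hvpp]; ring
  have hcont : Continuous fun x => Real.exp (-u x) * (lam' + κ * Vfun x) := by
    unfold Vfun
    fun_prop
  have hftc : (∫ x in (-π)..π, Real.exp (-u x) * (lam' + κ * Vfun x)) = g π - g (-π) :=
    intervalIntegral.integral_eq_sub_of_hasDerivAt key (hcont.intervalIntegrable _ _)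
  have hzero : (∫ x in (-π)..π, Real.exp (-u x) * (lam' + κ * Vfun x)) = 0 := by
    rw [hftc, hg]; simp [hvp, hvm]
  -- split the integral
  have hcontu : Continuous fun x => Real.exp (-u x) := by fun_prop
  have hcontV : Continuous fun x => Vfun x * Real.exp (-u x) := by
    unfold Vfun; fun_prop
  have hsplit : (∫ x in (-π)..π, Real.exp (-u x) * (lam' + κ * Vfun x))
      = lam' * (∫ x in (-π)..π, Real.exp (-u x))
        + κ * ∫ x in (-π)..π, Vfun x * Real.exp (-u x) := by
    rw [← intervalIntegral.integral_const_mul, ← intervalIntegral.integral_const_mul,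
      ← intervalIntegral.integral_add
        ((show Continuous fun x => lam' * Real.exp (-u x) from continuous_const.mul hcontu).intervalIntegrable _ _)
        ((show Continuous fun x => κ * (Vfun x * Real.exp (-u x)) from continuous_const.mul hcontV).intervalIntegrable _ _)]
    apply intervalIntegral.integral_congr
    intro x _
    ring
  set Z : ℝ := ∫ y in (-π)..π, Real.exp (-u y) with hZ
  have hZpos : 0 < Z := by
    apply intervalIntegral.intervalIntegral_pos_of_pos_on
      (hcontu.intervalIntegrable _ _)
    · intro x _; exact Real.exp_pos _
    · linarith [Real.pi_pos]
  have hdens : (∫ y in (-π)..π, Vfun y * dens u y)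
      = (∫ y in (-π)..π, Vfun y * Real.exp (-u y)) / Z := by
    rw [← intervalIntegral.integral_div]
    apply intervalIntegral.integral_congr
    intro x _
    simp only [dens, hZ]
    ring
  rw [hdens]
  rw [hsplit] at hzero
  field_simp
  linarith
end

section
/- Let κ > 0, a ∈ ℝ, let (u, λ) solve the ergodic equation E(κ, a) with density m, and let (v, λ′) solve the linearized equation L(κ, a) along (u, λ). Then ∫_{−π}^{π} [ (v'(y))² m(y) + (λ′ + κ V(y)) v(y) m(y) ] dy = 0; equivalently, ∫_{−π}^{π} (v'(y))² m(y) dy = −∫_{−π}^{π} (λ′ + κ V(y)) v(y) m(y) dy. -/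
/-!
Multiply the linearized equation by `v e^{-u}` and integrate: the left-hand side
`(-v'' + u' v') v e^{-u}` differs from `(v')² e^{-u}` by the exact derivative
`-(v v' e^{-u})'`, whose boundary values vanish because `v'(±π) = 0`.
-/

open Real

open intervalIntegral

theorem hasDerivAt_mul_deriv_mul_exp_neg {u v : ℝ → ℝ} {x : ℝ} (hu : DifferentiableAt ℝ u x)
    (hv : DifferentiableAt ℝ v x) (hv' : DifferentiableAt ℝ (deriv v) x) :
    HasDerivAt (fun y => v y * deriv v y * exp (-u y))
      ((deriv v x ^ 2 + v x * (deriv (deriv v) x - deriv u x * deriv v x)) * exp (-u x)) x :=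
  ((hv.hasDerivAt.fun_mul hv'.hasDerivAt).fun_mul hu.hasDerivAt.fun_neg.exp).congr_deriv (by ring)

theorem integral_weighted_green_eq_zero_of_neumann {u v : ℝ → ℝ} {a b : ℝ} (hu : ContDiff ℝ 1 u)
    (hv : ContDiff ℝ 2 v) (ha : deriv v a = 0) (hb : deriv v b = 0) :
    ∫ y in a..b, (deriv v y ^ 2 + v y * (deriv (deriv v) y - deriv u y * deriv v y)) *
      exp (-u y) = 0 := by
  have hv' : ContDiff ℝ 1 (deriv v) := hv.iterate_deriv' 1 1
  have hu_c := hu.continuous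
  have hu'_c := hu.continuous_deriv le_rfl
  have hv_c := hv.continuous
  have hv'_c := hv'.continuous
  have hv''_c := hv'.continuous_deriv le_rfl
  rw [integral_eq_sub_of_hasDerivAt
    (fun x _ => hasDerivAt_mul_deriv_mul_exp_neg (hu.differentiable one_ne_zero x)
      (hv.differentiable two_ne_zero x) (hv'.differentiable one_ne_zero x))
    (Continuous.intervalIntegrable (by fun_prop) _ _)]
  simp [ha, hb]

theorem continuous_dens {u : ℝ → ℝ} (hu : Continuous u) : Continuous (dens u) := by
  unfold dens
  fun_prop

theorem linearized_integral_identity_general (κ a : ℝ) (u v : ℝ → ℝ) (lam lam' : ℝ)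
    (hu : SolvesE κ a u lam) (hv : SolvesL κ u v lam') :
    (∫ y in (-π)..π,
        ((deriv v y) ^ 2 * dens u y + (lam' + κ * Vfun y) * v y * dens u y)) = 0 ∧
    (∫ y in (-π)..π, (deriv v y) ^ 2 * dens u y) =
      -∫ y in (-π)..π, (lam' + κ * Vfun y) * v y * dens u y := by
  obtain ⟨hu2, -⟩ := hu
  obtain ⟨hv2, -, hvπ, hvmπ, hL⟩ := hv
  have hdens : ∀ y ∈ Set.uIcc (-π) π,
      deriv v y ^ 2 * dens u y + (lam' + κ * Vfun y) * v y * dens u y =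
        (∫ y in (-π)..π, exp (-u y))⁻¹ *
          ((deriv v y ^ 2 + v y * (deriv (deriv v) y - deriv u y * deriv v y)) * exp (-u y)) := by
    intro y hy
    rw [Set.uIcc_of_le (by linarith [pi_pos])] at hy
    rw [show lam' + κ * Vfun y = deriv (deriv v) y - deriv u y * deriv v y by
      linarith [hL y hy], dens]
    ring
  have hzero : ∫ y in (-π)..π,
      (deriv v y ^ 2 * dens u y + (lam' + κ * Vfun y) * v y * dens u y) = 0 := by
    rw [integral_congr hdens, integral_const_mul,
      integral_weighted_green_eq_zero_of_neumann (hu2.of_le one_le_two) hv2 hvmπ hvπ, mul_zero]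
  refine ⟨hzero, ?_⟩
  have hm_c := continuous_dens hu2.continuous
  have hv_c := hv2.continuous
  have hv'_c := hv2.continuous_deriv one_le_two
  rw [integral_add (Continuous.intervalIntegrable (by fun_prop) _ _)
    (Continuous.intervalIntegrable (by unfold Vfun; fun_prop) _ _)] at hzero
  linarith

/-- The integral identity `∫ [(v')² m + (lam' + κ V) v m] = 0`, equivalently
`∫ (v')² m = -∫ (lam' + κ V) v m`. -/
theorem linearized_integral_identity (κ a : ℝ) (hκ : 0 < κ) (u v : ℝ → ℝ) (lam lam' : ℝ)
    (hu : SolvesE κ a u lam) (hv : SolvesL κ u v lam') :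
    (∫ y in (-π)..π,
        ((deriv v y) ^ 2 * dens u y + (lam' + κ * Vfun y) * v y * dens u y)) = 0 ∧
    (∫ y in (-π)..π, (deriv v y) ^ 2 * dens u y) =
      -∫ y in (-π)..π, (lam' + κ * Vfun y) * v y * dens u y :=
  linearized_integral_identity_general κ a u v lam lam' hu hv
end

section
/- Let κ > 0 and a, b ∈ ℝ. Let (u_a, λ_a) solve the ergodic equation E(κ, a) with density m_a and let (u_b, λ_b) solve the ergodic equation E(κ, b) with density m_b. Then (1/2) ∫_{−π}^{π} (u_b'(y) − u_a'(y))² (m_a(y) + m_b(y)) dy = κ (b − a) ∫_{−π}^{π} V(y) (m_b(y) − m_a(y)) dy. In particular, the map a ↦ ∫_{−π}^{π} V(y) m_a(y) dy is nondecreasing along any family of solutions. -/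
open Real intervalIntegral

lemma cd_deriv {u : ℝ → ℝ} (hu : ContDiff ℝ 2 u) : ContDiff ℝ 1 (deriv u) := by
  rw [show (2 : WithTop ℕ∞) = 1 + 1 from by norm_num] at hu
  exact (contDiff_succ_iff_deriv.mp hu).2.2

lemma Vfun_cont : Continuous Vfun := by unfold Vfun; fun_prop

lemma keyA (κ c d : ℝ) (u v : ℝ → ℝ) (lam mu : ℝ)
    (hu : SolvesE κ c u lam) (hv : SolvesE κ d v mu) :
    (1/2) * (∫ y in (-π)..π, (deriv v y - deriv u y)^2 * Real.exp (-u y))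
      + (mu - lam) * (∫ y in (-π)..π, Real.exp (-u y))
      - κ * (c - d) * (∫ y in (-π)..π, Vfun y * Real.exp (-u y)) = 0 := by
  obtain ⟨hu2, -, -, huπ, huπ', hueq⟩ := hu
  obtain ⟨hv2, -, -, hvπ, hvπ', hveq⟩ := hv
  have hud : Differentiable ℝ u := hu2.differentiable (by norm_num)
  have hu1 : ContDiff ℝ 1 (deriv u) := cd_deriv hu2
  have hv1 : ContDiff ℝ 1 (deriv v) := cd_deriv hv2
  have hu'c : Continuous (deriv u) := hu1.continuous
  have hv'c : Continuous (deriv v) := hv1.continuous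
  have hu'd : Differentiable ℝ (deriv u) := hu1.differentiable one_ne_zero
  have hv'd : Differentiable ℝ (deriv v) := hv1.differentiable one_ne_zero
  have hu''c : Continuous (deriv (deriv u)) := hu1.continuous_deriv le_rfl
  have hv''c : Continuous (deriv (deriv v)) := hv1.continuous_deriv le_rfl
  have hexpc : Continuous (fun y => Real.exp (-u y)) := (hud.continuous.neg).rexp
  have hpi : -π ≤ π := by linarith [pi_pos]
  set G : ℝ → ℝ := fun x => (deriv (deriv v) x - deriv (deriv u) x) * Real.exp (-u x)
      + (deriv v x - deriv u x) * (Real.exp (-u x) * (-(deriv u x))) with hGdef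
  have hGc : Continuous G := by
    apply Continuous.add
    · exact (hv''c.sub hu''c).mul hexpc
    · exact (hv'c.sub hu'c).mul (hexpc.mul hu'c.neg)
  have hzero : (∫ y in (-π)..π, G y) = 0 := by
    have hder : ∀ x ∈ Set.uIcc (-π) π,
        HasDerivAt (fun y => (deriv v y - deriv u y) * Real.exp (-u y)) (G x) x := by
      intro x _
      exact (((hv'd x).hasDerivAt).sub ((hu'd x).hasDerivAt)).mul ((((hud x).hasDerivAt).neg).exp)
    rw [integral_eq_sub_of_hasDerivAt hder (hGc.intervalIntegrable _ _)]
    simp [hvπ, huπ, hvπ', huπ']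
  have hcongr : (∫ y in (-π)..π, G y) = ∫ y in (-π)..π,
      ((1/2) * (deriv v y - deriv u y)^2 + (mu - lam) - κ*(c-d)*Vfun y) * Real.exp (-u y) := by
    apply integral_congr
    intro y hy
    rw [Set.uIcc_of_le hpi] at hy
    have e1 := hueq y hy
    have e2 := hveq y hy
    have hu'' : deriv (deriv u) y = (1/2)*(deriv u y)^2 + lam - κ * Vfun y * (1-c) := by linarith
    have hv'' : deriv (deriv v) y = (1/2)*(deriv v y)^2 + mu - κ * Vfun y * (1-d) := by linarith
    simp only [hGdef, hu'', hv'']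
    ring
  have hi1 : IntervalIntegrable (fun y => (deriv v y - deriv u y)^2 * Real.exp (-u y))
      MeasureTheory.volume (-π) π := (((hv'c.sub hu'c).pow 2).mul hexpc).intervalIntegrable _ _
  have hi2 : IntervalIntegrable (fun y => Real.exp (-u y)) MeasureTheory.volume (-π) π :=
    hexpc.intervalIntegrable _ _
  have hi3 : IntervalIntegrable (fun y => Vfun y * Real.exp (-u y)) MeasureTheory.volume (-π) π :=
    (Vfun_cont.mul hexpc).intervalIntegrable _ _
  have hsplit : (∫ y in (-π)..π,
      ((1/2) * (deriv v y - deriv u y)^2 + (mu - lam) - κ*(c-d)*Vfun y) * Real.exp (-u y))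
      = (1/2) * (∫ y in (-π)..π, (deriv v y - deriv u y)^2 * Real.exp (-u y))
        + (mu - lam) * (∫ y in (-π)..π, Real.exp (-u y))
        - κ * (c - d) * (∫ y in (-π)..π, Vfun y * Real.exp (-u y)) := by
    rw [show (fun y => ((1/2) * (deriv v y - deriv u y)^2 + (mu - lam) - κ*(c-d)*Vfun y) * Real.exp (-u y))
        = fun y => ((1/2) * ((deriv v y - deriv u y)^2 * Real.exp (-u y))
            + (mu - lam) * Real.exp (-u y)) - κ*(c-d) * (Vfun y * Real.exp (-u y)) from by
      funext y; ring]
    rw [integral_sub ((hi1.const_mul _).add (hi2.const_mul _)) (hi3.const_mul _),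
      integral_add (hi1.const_mul _) (hi2.const_mul _),
      integral_const_mul, integral_const_mul, integral_const_mul]
  linarith [hcongr ▸ hzero, hsplit]

lemma Ipos {u : ℝ → ℝ} (hu : Continuous u) : 0 < ∫ y in (-π)..π, Real.exp (-u y) :=
  intervalIntegral_pos_of_pos ((hu.neg.rexp).intervalIntegrable _ _)
    (fun x => Real.exp_pos _) (by linarith [pi_pos])

/-- Duality identity between two solutions of the ergodic equation, and
monotonicity of `a ↦ ∫ V m_a`. -/
theorem duality_identity (κ a b : ℝ) (hκ : 0 < κ) (ua ub : ℝ → ℝ) (la lb : ℝ)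
    (ha : SolvesE κ a ua la) (hb : SolvesE κ b ub lb) :
    ((1 / 2) * ∫ y in (-π)..π,
        (deriv ub y - deriv ua y) ^ 2 * (dens ua y + dens ub y)) =
      κ * (b - a) * ∫ y in (-π)..π, Vfun y * (dens ub y - dens ua y) ∧
    (a ≤ b →
      (∫ y in (-π)..π, Vfun y * dens ua y) ≤ ∫ y in (-π)..π, Vfun y * dens ub y) := by
  have hpi : -π ≤ π := by linarith [pi_pos]
  have hac : Continuous ua := ha.1.continuous
  have hbc : Continuous ub := hb.1.continuous
  have hea : Continuous (fun y => Real.exp (-ua y)) := hac.neg.rexp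
  have heb : Continuous (fun y => Real.exp (-ub y)) := hbc.neg.rexp
  have hIa : 0 < ∫ y in (-π)..π, Real.exp (-ua y) := Ipos hac
  have hIb : 0 < ∫ y in (-π)..π, Real.exp (-ub y) := Ipos hbc
  have hua'c : Continuous (deriv ua) := (cd_deriv ha.1).continuous
  have hub'c : Continuous (deriv ub) := (cd_deriv hb.1).continuous
  have hwc : Continuous (fun y => (deriv ub y - deriv ua y)^2) := (hub'c.sub hua'c).pow 2
  have hdac : Continuous (dens ua) := hea.div_const _
  have hdbc : Continuous (dens ub) := heb.div_const _
  have hdapos : ∀ y, 0 < dens ua y := fun y => div_pos (Real.exp_pos _) hIa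
  have hdbpos : ∀ y, 0 < dens ub y := fun y => div_pos (Real.exp_pos _) hIb
  have E1 := keyA κ a b ua ub la lb ha hb
  have E2 := keyA κ b a ub ua lb la hb ha
  -- rewrite E2's square
  rw [show (fun y => (deriv ua y - deriv ub y)^2 * Real.exp (-ub y))
      = fun y => (deriv ub y - deriv ua y)^2 * Real.exp (-ub y) from by funext y; ring] at E2
  have hia : IntervalIntegrable (fun y => (deriv ub y - deriv ua y)^2 * Real.exp (-ua y))
      MeasureTheory.volume (-π) π := (hwc.mul hea).intervalIntegrable _ _
  have hib : IntervalIntegrable (fun y => (deriv ub y - deriv ua y)^2 * Real.exp (-ub y))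
      MeasureTheory.volume (-π) π := (hwc.mul heb).intervalIntegrable _ _
  have hva : IntervalIntegrable (fun y => Vfun y * Real.exp (-ua y))
      MeasureTheory.volume (-π) π := (Vfun_cont.mul hea).intervalIntegrable _ _
  have hvb : IntervalIntegrable (fun y => Vfun y * Real.exp (-ub y))
      MeasureTheory.volume (-π) π := (Vfun_cont.mul heb).intervalIntegrable _ _
  have hX : (∫ y in (-π)..π, (deriv ub y - deriv ua y)^2 * (dens ua y + dens ub y))
      = (∫ y in (-π)..π, (deriv ub y - deriv ua y)^2 * Real.exp (-ua y))
          / (∫ y in (-π)..π, Real.exp (-ua y))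
        + (∫ y in (-π)..π, (deriv ub y - deriv ua y)^2 * Real.exp (-ub y))
          / (∫ y in (-π)..π, Real.exp (-ub y)) := by
    rw [show (fun y => (deriv ub y - deriv ua y)^2 * (dens ua y + dens ub y))
        = fun y => ((deriv ub y - deriv ua y)^2 * Real.exp (-ua y))
              / (∫ y in (-π)..π, Real.exp (-ua y))
            + ((deriv ub y - deriv ua y)^2 * Real.exp (-ub y))
              / (∫ y in (-π)..π, Real.exp (-ub y)) from by
      funext y; simp only [dens]; ring]
    rw [integral_add (hia.div_const _) (hib.div_const _), integral_div, integral_div]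
  have hD : (∫ y in (-π)..π, Vfun y * (dens ub y - dens ua y))
      = (∫ y in (-π)..π, Vfun y * Real.exp (-ub y)) / (∫ y in (-π)..π, Real.exp (-ub y))
        - (∫ y in (-π)..π, Vfun y * Real.exp (-ua y)) / (∫ y in (-π)..π, Real.exp (-ua y)) := by
    rw [show (fun y => Vfun y * (dens ub y - dens ua y))
        = fun y => (Vfun y * Real.exp (-ub y)) / (∫ y in (-π)..π, Real.exp (-ub y))
            - (Vfun y * Real.exp (-ua y)) / (∫ y in (-π)..π, Real.exp (-ua y)) from by
      funext y; simp only [dens]; ring]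
    rw [integral_sub (hvb.div_const _) (hva.div_const _), integral_div, integral_div]
  have key : ((1 / 2) * ∫ y in (-π)..π,
        (deriv ub y - deriv ua y) ^ 2 * (dens ua y + dens ub y)) =
      κ * (b - a) * ∫ y in (-π)..π, Vfun y * (dens ub y - dens ua y) := by
    rw [hX, hD]
    set Ia := ∫ y in (-π)..π, Real.exp (-ua y) with hIadef
    set Ib := ∫ y in (-π)..π, Real.exp (-ub y) with hIbdef
    set Sa := ∫ y in (-π)..π, (deriv ub y - deriv ua y)^2 * Real.exp (-ua y) with hSadef
    set Sb := ∫ y in (-π)..π, (deriv ub y - deriv ua y)^2 * Real.exp (-ub y) with hSbdef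
    set Ta := ∫ y in (-π)..π, Vfun y * Real.exp (-ua y) with hTadef
    set Tb := ∫ y in (-π)..π, Vfun y * Real.exp (-ub y) with hTbdef
    field_simp
    linear_combination (2*Ib) * E1 + (2*Ia) * E2
  refine ⟨key, fun hab => ?_⟩
  have hDsub : (∫ y in (-π)..π, Vfun y * (dens ub y - dens ua y))
      = (∫ y in (-π)..π, Vfun y * dens ub y) - (∫ y in (-π)..π, Vfun y * dens ua y) := by
    rw [show (fun y => Vfun y * (dens ub y - dens ua y))
        = fun y => Vfun y * dens ub y - Vfun y * dens ua y from by funext y; ring]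
    exact integral_sub ((Vfun_cont.mul hdbc).intervalIntegrable _ _)
      ((Vfun_cont.mul hdac).intervalIntegrable _ _)
  rcases eq_or_lt_of_le hab with rfl | hlt
  · -- a = b case
    have hX0 : (∫ y in (-π)..π, (deriv ub y - deriv ua y)^2 * (dens ua y + dens ub y)) = 0 := by
      have := key; simp at this; linarith
    have hqc : Continuous (fun y => (deriv ub y - deriv ua y)^2 * (dens ua y + dens ub y)) :=
      hwc.mul (hdac.add hdbc)
    have hq0 : ∀ y ∈ Set.Icc (-π) π,
        (deriv ub y - deriv ua y)^2 * (dens ua y + dens ub y) = 0 := by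
      by_contra h
      push_neg at h
      obtain ⟨y0, hy0, hne⟩ := h
      have hqnn : ∀ y, 0 ≤ (deriv ub y - deriv ua y)^2 * (dens ua y + dens ub y) := fun y =>
        mul_nonneg (sq_nonneg _) (by linarith [hdapos y, hdbpos y])
      have : (0:ℝ) < ∫ y in (-π)..π, (deriv ub y - deriv ua y)^2 * (dens ua y + dens ub y) := by
        have h0 : (∫ y in (-π)..π, (0:ℝ)) = 0 := by simp
        have := integral_lt_integral_of_continuousOn_of_le_of_exists_lt
          (by linarith [pi_pos] : -π < π) continuousOn_const hqc.continuousOn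
          (fun x _ => hqnn x) ⟨y0, hy0, lt_of_le_of_ne (hqnn y0) (Ne.symm hne)⟩
        rwa [h0] at this
      linarith [hX0]
    have hw0 : ∀ y ∈ Set.Icc (-π) π, deriv ub y - deriv ua y = 0 := by
      intro y hy
      have := hq0 y hy
      have hpos : 0 < dens ua y + dens ub y := by linarith [hdapos y, hdbpos y]
      have : (deriv ub y - deriv ua y)^2 = 0 := by
        rcases mul_eq_zero.mp this with h | h
        · exact h
        · exact absurd h (ne_of_gt hpos)
      exact pow_eq_zero_iff (by norm_num) |>.mp this
    have huv : ∀ y ∈ Set.Icc (-π) π, ua y = ub y := by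
      intro y hy
      have h0π : (0:ℝ) ∈ Set.Icc (-π) π := by constructor <;> linarith [pi_pos]
      have hsub : Set.uIcc (0:ℝ) y ⊆ Set.Icc (-π) π := by
        rw [← Set.uIcc_of_le hpi]
        exact Set.uIcc_subset_uIcc (by rw [Set.uIcc_of_le hpi]; exact h0π)
          (by rw [Set.uIcc_of_le hpi]; exact hy)
      have hftc : (∫ t in (0:ℝ)..y, (deriv ub t - deriv ua t))
          = (ub y - ua y) - (ub 0 - ua 0) := by
        apply integral_eq_sub_of_hasDerivAt
        · intro t _
          exact (((cd_deriv hb.1 |>.differentiable one_ne_zero) t |> fun h => (hb.1.differentiable (by norm_num) t).hasDerivAt).sub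
            ((ha.1.differentiable (by norm_num) t).hasDerivAt))
        · exact (hub'c.sub hua'c).intervalIntegrable _ _
      have hz : (∫ t in (0:ℝ)..y, (deriv ub t - deriv ua t)) = 0 := by
        rw [show (∫ t in (0:ℝ)..y, (deriv ub t - deriv ua t)) = ∫ t in (0:ℝ)..y, (0:ℝ) from
          integral_congr (fun t ht => hw0 t (hsub ht))]
        simp
      have h0a : ua 0 = 0 := ha.2.2.1
      have h0b : ub 0 = 0 := hb.2.2.1
      rw [hftc, h0a, h0b] at hz
      linarith
    have hIeq : (∫ y in (-π)..π, Real.exp (-ua y)) = ∫ y in (-π)..π, Real.exp (-ub y) := by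
      apply integral_congr
      intro y hy
      rw [Set.uIcc_of_le hpi] at hy
      show Real.exp (-ua y) = Real.exp (-ub y)
      rw [huv y hy]
    have : (∫ y in (-π)..π, Vfun y * dens ua y) = ∫ y in (-π)..π, Vfun y * dens ub y := by
      apply integral_congr
      intro y hy
      rw [Set.uIcc_of_le hpi] at hy
      show Vfun y * dens ua y = Vfun y * dens ub y
      simp only [dens]
      rw [huv y hy, hIeq]
    linarith [this]
  · -- a < b case
    have hnn : (0:ℝ) ≤ ∫ y in (-π)..π,
        (deriv ub y - deriv ua y)^2 * (dens ua y + dens ub y) :=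
      integral_nonneg hpi (fun y _ =>
        mul_nonneg (sq_nonneg _) (by linarith [hdapos y, hdbpos y]))
    have hprod : 0 ≤ κ * (b - a) * ∫ y in (-π)..π, Vfun y * (dens ub y - dens ua y) := by
      rw [← key]; linarith
    have hcoef : 0 < κ * (b - a) := by nlinarith
    have hD0 : 0 ≤ ∫ y in (-π)..π, Vfun y * (dens ub y - dens ua y) :=
      nonneg_of_mul_nonneg_right hprod hcoef
    rw [hDsub] at hD0
    linarith
end

section
/- Let κ > 0 and a ∈ ℝ, and let (u, λ) solve the ergodic equation E(κ, a) with density m; extend u to ℝ as an even 2π-periodic function and define ũ(x) := u(x + π) − u(π). Then ũ is even, twice continuously differentiable, and the pair (ũ, λ − 2κ(1 − a)) solves the ergodic equation E(κ, 2 − a); moreover its density m̃(x) = e^{−ũ(x)} / ∫_{−π}^{π} e^{−ũ(y)} dy satisfies ∫_{−π}^{π} V(y) m̃(y) dy = 2 − ∫_{−π}^{π} V(y) m(y) dy. -/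
open Real

private lemma deriv_perio {f : ℝ → ℝ} {T : ℝ} (h : Function.Periodic f T) (x : ℝ) :
    deriv f (x + T) = deriv f x := by
  have hfe : (fun y => f (y + T)) = f := funext h
  rw [← deriv_comp_add_const f T x, hfe]

/-- Symmetry of the ergodic problem: translating a (2π-periodic) solution of
`E(κ, a)` by `π` yields a solution of `E(κ, 2 - a)`, and the averages of `V`
against the two densities sum to `2`. -/
theorem translation_symmetry (κ a : ℝ) (hκ : 0 < κ) (u : ℝ → ℝ) (lam : ℝ)
    (hu : SolvesE κ a u lam) (hper : Function.Periodic u (2 * π)) :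
    (∀ x : ℝ, (fun x => u (x + π) - u π) (-x) = (fun x => u (x + π) - u π) x) ∧
    ContDiff ℝ 2 (fun x => u (x + π) - u π) ∧
    SolvesE κ (2 - a) (fun x => u (x + π) - u π) (lam - 2 * κ * (1 - a)) ∧
    (∫ y in (-π)..π, Vfun y * dens (fun x => u (x + π) - u π) y) =
      2 - ∫ y in (-π)..π, Vfun y * dens u y := by
  obtain ⟨hsm, heven, hu0, hdp, hdm, heq⟩ := hu
  have hπ : (0:ℝ) < π := Real.pi_pos
  -- evenness of the translate
  have hev : ∀ x : ℝ, u (-x + π) - u π = u (x + π) - u π := by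
    intro x
    have h1 : u (-x + π) = u (x - π) := by
      have := heven (x - π); rw [← this]; ring_nf
    have h2 : u (x - π) = u (x + π) := by
      have := hper (x - π); rw [← this]; ring_nf
    rw [h1, h2]
  -- smoothness of the translate
  have hsm' : ContDiff ℝ 2 (fun x => u (x + π) - u π) :=
    (hsm.comp (contDiff_id.add contDiff_const)).sub contDiff_const
  -- first derivative of the translate
  have hd1 : ∀ x : ℝ, deriv (fun x => u (x + π) - u π) x = deriv u (x + π) := by
    intro x
    rw [show (fun x => u (x + π) - u π) = (fun x => (fun y => u (y + π)) x - u π) from rfl,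
      deriv_sub_const, deriv_comp_add_const]
  -- second derivative of the translate
  have hd2 : ∀ x : ℝ, deriv (deriv (fun x => u (x + π) - u π)) x
      = deriv (deriv u) (x + π) := by
    intro x
    have : deriv (fun x => u (x + π) - u π) = fun x => deriv u (x + π) := funext hd1
    rw [this, deriv_comp_add_const]
  -- deriv u is odd
  have hodd : ∀ x : ℝ, deriv u (-x) = -deriv u x := by
    intro x
    have hfe : (fun y => u (-y)) = u := funext heven
    have := deriv_comp_neg u x
    rw [hfe] at this
    linarith
  have hd0 : deriv u 0 = 0 := by
    have := hodd 0; simp at this; linarith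
  -- periodicity of deriv u and deriv (deriv u)
  have hperd : ∀ x : ℝ, deriv u (x + 2 * π) = deriv u x := deriv_perio hper
  have hperd2 : ∀ x : ℝ, deriv (deriv u) (x + 2 * π) = deriv (deriv u) x := by
    refine deriv_perio ?_
    intro x; exact hperd x
  -- Vfun shift
  have hVshift : ∀ x : ℝ, Vfun (x + π) = 2 - Vfun x := by
    intro x; simp [Vfun, Real.cos_add_pi]; ring
  have hVshift' : ∀ x : ℝ, Vfun (x - π) = 2 - Vfun x := by
    intro x; simp [Vfun, Real.cos_sub_pi]; ring
  -- the translated pair solves E(κ, 2-a)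
  have hSol : SolvesE κ (2 - a) (fun x => u (x + π) - u π) (lam - 2 * κ * (1 - a)) := by
    refine ⟨hsm', hev, by simp, ?_, ?_, ?_⟩
    · rw [hd1]
      have : π + π = 0 + 2 * π := by ring
      rw [this, hperd 0, hd0]
    · rw [hd1]
      simpa using hd0
    · intro x hx
      obtain ⟨hx1, hx2⟩ := hx
      rcases le_or_gt x 0 with hx0 | hx0
      · -- x + π ∈ [0, π] ⊆ [-π, π]
        have hmem : x + π ∈ Set.Icc (-π) π := ⟨by linarith, by linarith⟩
        have h0 := heq (x + π) hmem
        rw [hVshift x] at h0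
        rw [hd1, hd2]
        linarith [h0]
      · -- use periodicity to go to x - π ∈ [-π, 0]
        have hmem : x - π ∈ Set.Icc (-π) π := ⟨by linarith, by linarith⟩
        have h0 := heq (x - π) hmem
        rw [hVshift' x] at h0
        have e1 : deriv u (x + π) = deriv u (x - π) := by
          have : x + π = (x - π) + 2 * π := by ring
          rw [this, hperd]
        have e2 : deriv (deriv u) (x + π) = deriv (deriv u) (x - π) := by
          have : x + π = (x - π) + 2 * π := by ring
          rw [this, hperd2]
        rw [hd1, hd2, e1, e2]
        linarith [h0]
  refine ⟨hev, hsm', hSol, ?_⟩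
  -- Integral identity
  set E : ℝ → ℝ := fun y => Real.exp (-u y) with hE
  have hEcont : Continuous E := Real.continuous_exp.comp hsm.continuous.neg
  have hVcont : Continuous Vfun := by
    have : Continuous fun x : ℝ => 1 - Real.cos x := continuous_const.sub Real.continuous_cos
    exact this
  have hEper : Function.Periodic E (2 * π) := fun x => by simp [hE, hper x]
  have hVper : Function.Periodic Vfun (2 * π) := fun x => by
    simp [Vfun, Real.cos_add_two_pi]
  set I : ℝ := ∫ y in (-π)..π, E y with hI
  set J : ℝ := ∫ y in (-π)..π, Vfun y * E y with hJ
  have hIpos : 0 < I := by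
    refine intervalIntegral.intervalIntegral_pos_of_pos
      (hEcont.intervalIntegrable _ _) (fun x => Real.exp_pos _) (by linarith)
  have hexp : ∀ y : ℝ, Real.exp (-(u (y + π) - u π)) = Real.exp (u π) * E (y + π) := by
    intro y
    rw [hE]
    rw [show -(u (y + π) - u π) = u π + -(u (y + π)) by ring, Real.exp_add]
  -- shift identity for integrals over one period
  have hshift : (∫ y in (0:ℝ)..(2*π), E y) = I := by
    have := hEper.intervalIntegral_add_eq 0 (-π)
    simpa [show (-π) + 2 * π = π by ring] using this
  have hshiftVE : (∫ y in (0:ℝ)..(2*π), Vfun y * E y) = J := by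
    have := (hVper.mul hEper).intervalIntegral_add_eq 0 (-π)
    simpa [show (-π) + 2 * π = π by ring] using this
  -- denominator of the translated density
  have hD : (∫ y in (-π)..π, Real.exp (-(u (y + π) - u π))) = Real.exp (u π) * I := by
    rw [intervalIntegral.integral_congr (g := fun y => Real.exp (u π) * E (y + π))
      (fun y _ => hexp y)]
    rw [intervalIntegral.integral_const_mul]
    have := intervalIntegral.integral_comp_add_right (a := -π) (b := π) E π
    rw [this]
    rw [show (-π) + π = (0:ℝ) by ring, show π + π = 2*π by ring, hshift]
  -- numerator of the translated density
  have hN : (∫ y in (-π)..π, Vfun y * Real.exp (-(u (y + π) - u π)))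
      = Real.exp (u π) * (2 * I - J) := by
    have step1 : (∫ y in (-π)..π, Vfun y * Real.exp (-(u (y + π) - u π)))
        = Real.exp (u π) * ∫ y in (-π)..π, Vfun y * E (y + π) := by
      rw [← intervalIntegral.integral_const_mul]
      refine intervalIntegral.integral_congr (fun y _ => ?_)
      rw [hexp y]; ring
    rw [step1]
    have step2 : (∫ y in (-π)..π, Vfun y * E (y + π))
        = ∫ z in (0:ℝ)..(2*π), Vfun (z - π) * E z := by
      have := intervalIntegral.integral_comp_add_right (a := -π) (b := π)
        (fun z => Vfun (z - π) * E z) π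
      rw [show (-π) + π = (0:ℝ) by ring, show π + π = 2*π by ring] at this
      rw [← this]
      refine intervalIntegral.integral_congr (fun y _ => ?_)
      simp
    rw [step2]
    have step3 : (∫ z in (0:ℝ)..(2*π), Vfun (z - π) * E z)
        = ∫ z in (0:ℝ)..(2*π), (2 * E z - Vfun z * E z) := by
      refine intervalIntegral.integral_congr (fun z _ => ?_)
      rw [hVshift' z]; ring
    rw [step3]
    rw [intervalIntegral.integral_sub (f := fun z => 2 * E z) (g := fun z => Vfun z * E z)
      ((continuous_const.mul hEcont).intervalIntegrable _ _)
      ((hVcont.mul hEcont).intervalIntegrable _ _),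
      intervalIntegral.integral_const_mul, hshift, hshiftVE]
  -- put everything together
  have lhs_eq : (∫ y in (-π)..π, Vfun y * dens (fun x => u (x + π) - u π) y)
      = (Real.exp (u π) * (2 * I - J)) / (Real.exp (u π) * I) := by
    unfold dens
    rw [show (∫ y in (-π)..π, Real.exp (-(u (y + π) - u π))) = Real.exp (u π) * I from hD]
    rw [show (∫ y in (-π)..π,
        Vfun y * (Real.exp (-(u (y + π) - u π)) / (Real.exp (u π) * I)))
      = (∫ y in (-π)..π, Vfun y * Real.exp (-(u (y + π) - u π))) / (Real.exp (u π) * I) by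
        rw [← intervalIntegral.integral_div]
        exact intervalIntegral.integral_congr (fun y _ => by ring)]
    rw [hN]
  have rhs_eq : (∫ y in (-π)..π, Vfun y * dens u y) = J / I := by
    unfold dens
    rw [show (∫ y in (-π)..π, Vfun y * (Real.exp (-u y) / I))
      = (∫ y in (-π)..π, Vfun y * Real.exp (-u y)) / I by
        rw [← intervalIntegral.integral_div]
        exact intervalIntegral.integral_congr (fun y _ => by ring)]
  rw [lhs_eq, rhs_eq]
  have hIne : I ≠ 0 := ne_of_gt hIpos
  have hexpne : Real.exp (u π) ≠ 0 := Real.exp_ne_zero _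
  field_simp
end

section
/- There exists ℓ > 0 such that for every κ ≥ 1, every a ∈ [0, 1], and every solution (u, λ) of the ergodic equation E(κ, a), one has 0 ≤ λ ≤ ℓ κ^{1/2}. -/
open Real

set_option maxHeartbeats 1000000 in
/-- Uniform bound on the ergodic constant: `0 ≤ λ ≤ ℓ κ^(1/2)`. -/
theorem ergodic_constant_bound :
    ∃ ℓ : ℝ, 0 < ℓ ∧ ∀ κ : ℝ, 1 ≤ κ → ∀ a ∈ Set.Icc (0 : ℝ) 1,
      ∀ (u : ℝ → ℝ) (lam : ℝ), SolvesE κ a u lam →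
        0 ≤ lam ∧ lam ≤ ℓ * κ ^ ((1 : ℝ) / 2) := by
  refine ⟨4, by norm_num, ?_⟩
  intro κ hκ a ha u lam hsol
  obtain ⟨hu2, heven, hu0, hdpi, hdpi', heq⟩ := hsol
  obtain ⟨ha0, ha1⟩ := ha
  have hκ0 : (0:ℝ) < κ := lt_of_lt_of_le one_pos hκ
  have hπ : (0:ℝ) < π := Real.pi_pos
  -- regularity
  have h11 : ContDiff ℝ (1+1) u := by
    rw [(by norm_num : (1+1 : WithTop ℕ∞) = 2)]; exact hu2
  rw [contDiff_succ_iff_deriv] at h11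
  have hdiff : Differentiable ℝ u := h11.1
  have hd1 : ContDiff ℝ 1 (deriv u) := h11.2.2
  have hdiff' : Differentiable ℝ (deriv u) := (contDiff_one_iff_deriv.mp hd1).1
  have hcont'' : Continuous (deriv (deriv u)) := (contDiff_one_iff_deriv.mp hd1).2
  -- derivative of even function is odd; vanishes at 0
  have hd0 : deriv u 0 = 0 := by
    have h1 : HasDerivAt (fun y => u (-y)) (-(deriv u (-(0:ℝ)))) 0 := by
      simpa [Function.comp_def] using ((hdiff (-(0:ℝ))).hasDerivAt.comp 0 (hasDerivAt_neg (0:ℝ)))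
    have h2 : HasDerivAt u (-(deriv u (-(0:ℝ)))) 0 := by
      simpa only [heven] using h1
    have := h2.deriv
    simp only [neg_zero] at this
    linarith
  have hVnn : ∀ x : ℝ, 0 ≤ Vfun x := fun x => by
    simp only [Vfun, sub_nonneg]; exact Real.cos_le_one x
  have hrhs : ∀ x : ℝ, 0 ≤ κ * Vfun x * (1 - a) := fun x =>
    mul_nonneg (mul_nonneg hκ0.le (hVnn x)) (by linarith)
  have huu : ∀ x ∈ Set.Icc (-π) π,
      deriv (deriv u) x = (1/2) * (deriv u x)^2 + lam - κ * Vfun x * (1-a) := by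
    intro x hx; have := heq x hx; linarith
  constructor
  · -- lower bound: evaluate at a minimum point of u on [0, π]
    obtain ⟨x₀, hx₀mem, hx₀min⟩ :=
      (isCompact_Icc : IsCompact (Set.Icc (0:ℝ) π)).exists_isMinOn
        (Set.nonempty_Icc.mpr hπ.le) hu2.continuous.continuousOn
    have hmin : ∀ x ∈ Set.Icc (-π) π, u x₀ ≤ u x := by
      intro x hx
      rcases le_total 0 x with h | h
      · exact hx₀min ⟨h, hx.2⟩
      · have : u x₀ ≤ u (-x) := hx₀min ⟨by linarith, by linarith [hx.1]⟩
        rwa [heven] at this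
    have hx0I : x₀ ∈ Set.Icc (-π) π := ⟨by linarith [hx₀mem.1], hx₀mem.2⟩
    have hder0 : deriv u x₀ = 0 := by
      rcases eq_or_lt_of_le hx₀mem.1 with h0 | h0
      · rw [← h0]; exact hd0
      rcases eq_or_lt_of_le hx₀mem.2 with hpi | hpi
      · rw [hpi]; exact hdpi
      · have hloc : IsLocalMin u x₀ :=
          Filter.eventually_of_mem (Icc_mem_nhds (by linarith [hx₀mem.1]) hpi) hmin
        exact hloc.deriv_eq_zero
    have hdd0 : 0 ≤ deriv (deriv u) x₀ := by
      by_contra hneg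
      push_neg at hneg
      have hev : ∀ᶠ y in nhds x₀, deriv (deriv u) y < 0 :=
        Filter.Tendsto.eventually_lt_const hneg hcont''.continuousAt
      obtain ⟨ε, hε, hball⟩ := Metric.eventually_nhds_iff_ball.mp hev
      set ε' := min (ε/2) π with hε'def
      have hε'0 : 0 < ε' := lt_min (by linarith) hπ
      have hε'2 : ε' ≤ ε/2 := min_le_left _ _
      have hε'π : ε' ≤ π := min_le_right _ _
      have hsub : ∀ y ∈ Set.Icc (x₀ - ε') x₀, deriv (deriv u) y < 0 := by
        intro y hy
        apply hball
        rw [Metric.mem_ball, Real.dist_eq]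
        have : |y - x₀| ≤ ε' := abs_le.mpr ⟨by linarith [hy.1], by linarith [hy.2]⟩
        linarith
      have hanti : StrictAntiOn (deriv u) (Set.Icc (x₀ - ε') x₀) :=
        strictAntiOn_of_deriv_neg (convex_Icc _ _) hdiff'.continuous.continuousOn
          (fun y hy => hsub y (by rw [interior_Icc] at hy; exact Set.Ioo_subset_Icc_self hy))
      have hmono : StrictMonoOn u (Set.Icc (x₀ - ε') x₀) := by
        apply strictMonoOn_of_deriv_pos (convex_Icc _ _) hdiff.continuous.continuousOn
        intro y hy
        rw [interior_Icc] at hy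
        have := hanti ⟨hy.1.le, hy.2.le⟩ ⟨by linarith [hε'0], le_refl _⟩ hy.2
        rw [hder0] at this
        exact this
      have h1 : u (x₀ - ε') < u x₀ :=
        hmono ⟨le_refl _, by linarith⟩ ⟨by linarith, le_refl _⟩ (by linarith)
      have h2 : u x₀ ≤ u (x₀ - ε') :=
        hmin _ ⟨by linarith [hx₀mem.1], by linarith [hx₀mem.2]⟩
      linarith
    have hx := huu x₀ hx0I
    rw [hder0] at hx
    have := hrhs x₀
    nlinarith
  · -- upper bound
    rw [← Real.sqrt_eq_rpow]
    by_contra hlt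
    push_neg at hlt
    have hsκ : 1 ≤ Real.sqrt κ := by
      rw [show (1:ℝ) = Real.sqrt 1 by simp]
      exact Real.sqrt_le_sqrt hκ
    have hκs : (Real.sqrt κ)^2 = κ := Real.sq_sqrt hκ0.le
    have hlam4 : 4 < lam := by nlinarith
    have hlam0 : 0 < lam := by linarith
    set s := Real.sqrt lam with hs
    have hs0 : 0 < s := Real.sqrt_pos.mpr hlam0
    have hssq : s^2 = lam := Real.sq_sqrt hlam0.le
    set δ := min (Real.sqrt (lam/κ)) π with hδdef
    have hδ0 : 0 < δ := lt_min (Real.sqrt_pos.mpr (by positivity)) hπ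
    have hδπ : δ ≤ π := min_le_right _ _
    have hδsq : κ * δ^2 ≤ lam := by
      have h1 : δ ≤ Real.sqrt (lam/κ) := min_le_left _ _
      have h2 : (Real.sqrt (lam/κ))^2 = lam/κ := Real.sq_sqrt (by positivity)
      have h3 : δ^2 ≤ lam/κ := by nlinarith [hδ0.le, Real.sqrt_nonneg (lam/κ)]
      rw [mul_comm, ← le_div_iff₀ hκ0]
      exact h3
    -- key differential inequality on [0, δ]
    have hkey : ∀ x ∈ Set.Icc (0:ℝ) δ,
        (deriv u x)^2 / 2 + lam / 2 ≤ deriv (deriv u) x := by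
      intro x hx
      have hxI : x ∈ Set.Icc (-π) π := ⟨by linarith [hx.1], le_trans hx.2 hδπ⟩
      have heqx := huu x hxI
      have hV : Vfun x ≤ x^2/2 := by
        have := Real.one_sub_sq_div_two_le_cos (x := x)
        simp only [Vfun]; linarith
      have hVb : κ * Vfun x * (1 - a) ≤ lam / 2 := by
        have h1 : κ * Vfun x * (1-a) ≤ κ * Vfun x := by
          nlinarith [mul_nonneg ha0 (mul_nonneg hκ0.le (hVnn x))]
        have h2 : κ * Vfun x ≤ κ * (x^2/2) := by nlinarith
        have h3 : x^2 ≤ δ^2 := by nlinarith [hx.1, hx.2]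
        nlinarith
      nlinarith
    -- the arctan comparison function
    have hθd : ∀ x : ℝ, HasDerivAt (fun y => Real.arctan (deriv u y / s))
        ((1 / (1 + (deriv u x / s)^2)) * (deriv (deriv u) x / s)) x := by
      intro x
      exact ((hdiff' x).hasDerivAt.div_const s).arctan
    have hθbound : ∀ x ∈ Set.Icc (0:ℝ) δ,
        s/2 ≤ (1 / (1 + (deriv u x / s)^2)) * (deriv (deriv u) x / s) := by
      intro x hx
      have hk := hkey x hx
      rw [div_mul_div_comm, one_mul, le_div_iff₀ (by positivity)]
      have hexp : s/2 * ((1 + (deriv u x / s)^2) * s) = lam/2 + (deriv u x)^2/2 := by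
        rw [div_pow, ← hssq]
        field_simp
      linarith [hexp, hk]
    -- monotonicity of θ x - (s/2) x
    have hφd : ∀ x : ℝ, HasDerivAt (fun y => Real.arctan (deriv u y / s) - s/2 * y)
        ((1 / (1 + (deriv u x / s)^2)) * (deriv (deriv u) x / s) - s/2) x := by
      intro x
      exact (hθd x).sub (by simpa using (hasDerivAt_id x).const_mul (s/2))
    have hmono : MonotoneOn (fun y => Real.arctan (deriv u y / s) - s/2 * y)
        (Set.Icc (0:ℝ) δ) := by
      apply monotoneOn_of_deriv_nonneg (convex_Icc _ _)
      · exact ((Real.continuous_arctan.comp (hdiff'.continuous.div_const s)).sub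
          (continuous_const.mul continuous_id)).continuousOn
      · intro x hx
        exact (hφd x).differentiableAt.differentiableWithinAt
      · intro x hx
        rw [interior_Icc] at hx
        rw [(hφd x).deriv]
        have := hθbound x (Set.Ioo_subset_Icc_self hx)
        linarith
    have hm := hmono (Set.left_mem_Icc.mpr hδ0.le) (Set.right_mem_Icc.mpr hδ0.le) hδ0.le
    simp only [hd0, zero_div, Real.arctan_zero, mul_zero, sub_zero, zero_sub] at hm
    have hatan : Real.arctan (deriv u δ / s) < π/2 := Real.arctan_lt_pi_div_two _
    have hfin : s * δ < π := by nlinarith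
    -- case analysis on the min
    rcases min_cases (Real.sqrt (lam/κ)) π with ⟨h1, _⟩ | ⟨h1, h2⟩
    · have hδ2 : δ^2 = lam/κ := by
        rw [hδdef, h1]; exact Real.sq_sqrt (by positivity)
      have hκδ : κ * δ^2 = lam := by rw [hδ2]; field_simp
      have hsq : (s*δ)^2 < π^2 := by nlinarith [mul_pos hs0 hδ0, hfin]
      have hsd : (s*δ)^2 = lam * δ^2 := by rw [mul_pow, hssq]
      have hA : lam * δ^2 < π^2 := by linarith [hsd ▸ hsq]
      have hκδ' : lam * (κ * δ^2) = lam * lam := by rw [hκδ]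
      have hB : lam^2 < π^2 * κ := by nlinarith [hA, hκ0, hκδ']
      have h16 : 16 * κ < lam^2 := by nlinarith [hlt, hκs, hsκ, hlam0]
      have hπ4 : π < 3.15 := Real.pi_lt_d2
      nlinarith [hB, h16, hκ0, mul_self_lt_mul_self hπ.le hπ4]
    · -- δ = π : s < 1, so lam < 1, contradiction with lam > 4
      have : s < 1 := by
        rw [hδdef, h1] at hfin
        nlinarith
      nlinarith
end

section
/- For every δ ∈ (0, 1) there exist a threshold κ̃(δ) ≥ 1 and constants c₂, c₃ > 0 (independent of δ and κ) and c₁ = c₁(δ) > 0 such that for every κ ≥ κ̃(δ), every a ∈ [0, 1 − δ], and every solution (u, λ) of the ergodic equation E(κ, a), one has c₁ κ^{1/2} x² − c₃ ≤ u(x) ≤ c₂ κ^{1/2} x² + c₃ for all x ∈ [−π, π]. -/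
open Real

/-!
Under the Hopf–Cole transform `φ = exp (-u / 2)` the ergodic equation becomes the linear Neumann
problem `φ'' = ((s² (1 - cos x) - λ) / 2) φ` on `[0, π]`, with `s² = κ (1 - a)`, `φ > 0` and
`φ 0 = 1`. Sturm comparison (monotone Wronskians) with Gaussians and hyperbolic cosines first
locates the eigenvalue, `0 < λ ≤ s`, and then gives
`exp (-1 - s x²) ≤ φ x ≤ exp (π / 2 - s x² / (8π))`.
Taking logarithms and using `√δ √κ ≤ s ≤ √κ` gives the theorem.
-/

open Set

section Monotonicity

variable {f f' : ℝ → ℝ} {a b : ℝ}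

theorem monotoneOn_Icc_of_hasDerivAt_nonneg (hf : ∀ x ∈ Icc a b, HasDerivAt f (f' x) x)
    (hf' : ∀ x ∈ Ioo a b, 0 ≤ f' x) : MonotoneOn f (Icc a b) :=
  monotoneOn_of_hasDerivWithinAt_nonneg (convex_Icc a b)
    (fun x hx => (hf x hx).continuousAt.continuousWithinAt)
    (fun x hx => (hf x (interior_subset hx)).hasDerivWithinAt) (by rwa [interior_Icc])

theorem antitoneOn_Icc_of_hasDerivAt_nonpos (hf : ∀ x ∈ Icc a b, HasDerivAt f (f' x) x)
    (hf' : ∀ x ∈ Ioo a b, f' x ≤ 0) : AntitoneOn f (Icc a b) :=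
  antitoneOn_of_hasDerivWithinAt_nonpos (convex_Icc a b)
    (fun x hx => (hf x hx).continuousAt.continuousWithinAt)
    (fun x hx => (hf x (interior_subset hx)).hasDerivWithinAt) (by rwa [interior_Icc])

theorem strictMonoOn_Icc_of_hasDerivAt_pos (hf : ∀ x ∈ Icc a b, HasDerivAt f (f' x) x)
    (hf' : ∀ x ∈ Ioo a b, 0 < f' x) : StrictMonoOn f (Icc a b) :=
  strictMonoOn_of_hasDerivWithinAt_pos (convex_Icc a b)
    (fun x hx => (hf x hx).continuousAt.continuousWithinAt)
    (fun x hx => (hf x (interior_subset hx)).hasDerivWithinAt) (by rwa [interior_Icc])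

end Monotonicity

def SolvesSchrodinger (q φ φ' : ℝ → ℝ) (s : Set ℝ) : Prop :=
  ∀ x ∈ s, HasDerivAt φ (φ' x) x ∧ HasDerivAt φ' (q x * φ x) x

def wronskian (φ φ' ψ ψ' : ℝ → ℝ) (x : ℝ) : ℝ := φ' x * ψ x - φ x * ψ' x

section Wronskian

variable {φ φ' ψ ψ' : ℝ → ℝ} {a b : ℝ}

theorem hasDerivAt_div_wronskian {x : ℝ} (hφ : HasDerivAt φ (φ' x) x)
    (hψ : HasDerivAt ψ (ψ' x) x) (hψ0 : ψ x ≠ 0) :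
    HasDerivAt (fun y => φ y / ψ y) (wronskian φ φ' ψ ψ' x / ψ x ^ 2) x :=
  hφ.div hψ hψ0

theorem monotoneOn_div_of_wronskian_nonneg (hφ : ∀ x ∈ Icc a b, HasDerivAt φ (φ' x) x)
    (hψ : ∀ x ∈ Icc a b, HasDerivAt ψ (ψ' x) x) (hψ0 : ∀ x ∈ Icc a b, ψ x ≠ 0)
    (hW : ∀ x ∈ Ioo a b, 0 ≤ wronskian φ φ' ψ ψ' x) :
    MonotoneOn (fun y => φ y / ψ y) (Icc a b) :=
  monotoneOn_Icc_of_hasDerivAt_nonneg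
    (fun x hx => hasDerivAt_div_wronskian (hφ x hx) (hψ x hx) (hψ0 x hx))
    fun x hx => div_nonneg (hW x hx) (sq_nonneg _)

theorem antitoneOn_div_of_wronskian_nonpos (hφ : ∀ x ∈ Icc a b, HasDerivAt φ (φ' x) x)
    (hψ : ∀ x ∈ Icc a b, HasDerivAt ψ (ψ' x) x) (hψ0 : ∀ x ∈ Icc a b, ψ x ≠ 0)
    (hW : ∀ x ∈ Ioo a b, wronskian φ φ' ψ ψ' x ≤ 0) :
    AntitoneOn (fun y => φ y / ψ y) (Icc a b) :=
  antitoneOn_Icc_of_hasDerivAt_nonpos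
    (fun x hx => hasDerivAt_div_wronskian (hφ x hx) (hψ x hx) (hψ0 x hx))
    fun x hx => div_nonpos_of_nonpos_of_nonneg (hW x hx) (sq_nonneg _)

end Wronskian

namespace SolvesSchrodinger

variable {q r φ φ' ψ ψ' : ℝ → ℝ} {s t : Set ℝ} {a b : ℝ}

theorem mono (h : SolvesSchrodinger q φ φ' s) (hts : t ⊆ s) : SolvesSchrodinger q φ φ' t :=
  fun x hx => h x (hts hx)

theorem hasDerivAt (h : SolvesSchrodinger q φ φ' s) {x : ℝ} (hx : x ∈ s) :
    HasDerivAt φ (φ' x) x :=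
  (h x hx).1

theorem hasDerivAt_wronskian (hφ : SolvesSchrodinger q φ φ' s)
    (hψ : SolvesSchrodinger r ψ ψ' s) {x : ℝ} (hx : x ∈ s) :
    HasDerivAt (wronskian φ φ' ψ ψ') ((q x - r x) * (φ x * ψ x)) x := by
  obtain ⟨hφ₁, hφ₂⟩ := hφ x hx
  obtain ⟨hψ₁, hψ₂⟩ := hψ x hx
  exact ((hφ₂.mul hψ₁).sub (hφ₁.mul hψ₂)).congr_deriv (by ring)

theorem monotoneOn_wronskian (hφ : SolvesSchrodinger q φ φ' (Icc a b))
    (hψ : SolvesSchrodinger r ψ ψ' (Icc a b)) (hrq : ∀ x ∈ Ioo a b, r x ≤ q x)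
    (hφψ : ∀ x ∈ Ioo a b, 0 ≤ φ x * ψ x) : MonotoneOn (wronskian φ φ' ψ ψ') (Icc a b) :=
  monotoneOn_Icc_of_hasDerivAt_nonneg (fun _ hx => hφ.hasDerivAt_wronskian hψ hx)
    fun x hx => mul_nonneg (sub_nonneg.2 (hrq x hx)) (hφψ x hx)

theorem antitoneOn_wronskian (hφ : SolvesSchrodinger q φ φ' (Icc a b))
    (hψ : SolvesSchrodinger r ψ ψ' (Icc a b)) (hqr : ∀ x ∈ Ioo a b, q x ≤ r x)
    (hφψ : ∀ x ∈ Ioo a b, 0 ≤ φ x * ψ x) : AntitoneOn (wronskian φ φ' ψ ψ') (Icc a b) :=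
  antitoneOn_Icc_of_hasDerivAt_nonpos (fun _ hx => hφ.hasDerivAt_wronskian hψ hx)
    fun x hx => mul_nonpos_of_nonpos_of_nonneg (sub_nonpos.2 (hqr x hx)) (hφψ x hx)

end SolvesSchrodinger

theorem solvesSchrodinger_gaussian (b : ℝ) :
    SolvesSchrodinger (fun x => 4 * b ^ 2 * x ^ 2 - 2 * b) (fun x => exp (-(b * x ^ 2)))
      (fun x => -(2 * b * x) * exp (-(b * x ^ 2))) univ := by
  intro x _
  have hexp : HasDerivAt (fun y => exp (-(b * y ^ 2))) (exp (-(b * x ^ 2)) * -(b * (2 * x)))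
      x := by
    simpa using ((hasDerivAt_pow 2 x).const_mul b).neg.exp
  refine ⟨hexp.congr_deriv (by ring), ?_⟩
  exact ((((hasDerivAt_id' x).const_mul (2 * b)).neg).mul hexp).congr_deriv
    (by simp only [Pi.neg_apply]; ring)

theorem solvesSchrodinger_cosh (m c : ℝ) :
    SolvesSchrodinger (fun _ => m ^ 2) (fun x => cosh (m * (c - x)))
      (fun x => -(m * sinh (m * (c - x)))) univ := by
  intro x _
  have hlin : HasDerivAt (fun y => m * (c - y)) (-m) x := by
    simpa using ((hasDerivAt_id x).const_sub c).const_mul m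
  refine ⟨((hasDerivAt_cosh _).comp x hlin).congr_deriv (by ring), ?_⟩
  exact (((hasDerivAt_sinh _).comp x hlin).const_mul m).neg.congr_deriv (by ring)

theorem cosh_div_cosh_le {a b : ℝ} (ha : 0 ≤ a) : cosh a / cosh b ≤ 2 * exp (a - b) := by
  have hb : exp b / 2 ≤ cosh b := by rw [cosh_eq]; linarith [exp_pos (-b)]
  have ha' : cosh a ≤ exp a := by
    rw [cosh_eq]; linarith [exp_le_exp.2 (show -a ≤ a by linarith)]
  rw [div_le_iff₀ (cosh_pos b), exp_sub]
  calc cosh a ≤ exp a := ha'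
    _ = 2 * (exp a / exp b) * (exp b / 2) := by field_simp
    _ ≤ 2 * (exp a / exp b) * cosh b := by gcongr

noncomputable def schrodingerPotential (s lam x : ℝ) : ℝ := (s ^ 2 * Vfun x - lam) / 2

theorem schrodingerPotential_le_of_le {s lam x y : ℝ} (hx : 0 ≤ x) (hy : y ≤ π) (hxy : x ≤ y) :
    schrodingerPotential s lam x ≤ schrodingerPotential s lam y := by
  have := cos_le_cos_of_nonneg_of_le_pi hx hy hxy
  unfold schrodingerPotential Vfun
  nlinarith [sq_nonneg s]

structure IsGroundState (s lam : ℝ) (φ φ' : ℝ → ℝ) : Prop where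
  solves : SolvesSchrodinger (schrodingerPotential s lam) φ φ' (Icc 0 π)
  pos : ∀ x ∈ Icc 0 π, 0 < φ x
  apply_zero : φ 0 = 1
  deriv_zero : φ' 0 = 0
  deriv_pi : φ' π = 0

namespace IsGroundState

variable {s lam : ℝ} {φ φ' : ℝ → ℝ} (h : IsGroundState s lam φ φ')
include h

theorem lam_pos (hs : s ≠ 0) : 0 < lam := by
  by_contra! hlam
  have hpot : ∀ x ∈ Ioo 0 π, 0 < schrodingerPotential s lam x := fun x hx => by
    have := cos_lt_cos_of_nonneg_of_le_pi le_rfl hx.2.le hx.1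
    unfold schrodingerPotential Vfun
    rw [cos_zero] at this
    have : 0 < s ^ 2 := by positivity
    nlinarith
  have hmono : StrictMonoOn φ' (Icc 0 π) := strictMonoOn_Icc_of_hasDerivAt_pos
    (fun x hx => (h.solves x hx).2)
    fun x hx => mul_pos (hpot x hx) (h.pos x (Ioo_subset_Icc_self hx))
  have := hmono (left_mem_Icc.2 pi_pos.le) (right_mem_Icc.2 pi_pos.le) pi_pos
  rw [h.deriv_zero, h.deriv_pi] at this
  exact this.false

theorem wronskian_gaussian_pi_pos {b : ℝ} (hb : 0 < b) :
    0 < wronskian φ φ' (fun x => exp (-(b * x ^ 2)))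
      (fun x => -(2 * b * x) * exp (-(b * x ^ 2))) π := by
  have := h.pos π (right_mem_Icc.2 pi_pos.le)
  simp only [wronskian, h.deriv_pi]
  nlinarith [mul_pos (mul_pos this (mul_pos hb pi_pos)) (exp_pos (-(b * π ^ 2)))]

/-- If `λ > s`, the potential lies below that of the Gaussian `exp (-(s / 4) x²)` (the ground state
of `-d² + s² x² / 4`), so their Wronskian would decrease from `0` at `0` to a positive value
at `π`. -/
theorem lam_le (hs : 0 < s) : lam ≤ s := by
  by_contra! hlam
  have hanti := h.solves.antitoneOn_wronskian ((solvesSchrodinger_gaussian (s / 4)).mono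
    (subset_univ _)) (fun x _ => by
      have := one_sub_sq_div_two_le_cos (x := x)
      unfold schrodingerPotential Vfun
      nlinarith [sq_nonneg s])
    fun x hx => (mul_pos (h.pos x (Ioo_subset_Icc_self hx)) (exp_pos _)).le
  have := hanti (left_mem_Icc.2 pi_pos.le) (right_mem_Icc.2 pi_pos.le) pi_pos.le
  have hW0 : wronskian φ φ' (fun x => exp (-(s / 4 * x ^ 2)))
      (fun x => -(2 * (s / 4) * x) * exp (-(s / 4 * x ^ 2))) 0 = 0 := by
    simp [wronskian, h.deriv_zero]
  linarith [h.wronskian_gaussian_pi_pos (show 0 < s / 4 by positivity)]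

/-- The potential increases on `[0, π]`, so `φ'` first decreases and then increases; since it
vanishes at both ends it is nonpositive. -/
theorem deriv_nonpos {x : ℝ} (hx : x ∈ Icc 0 π) : φ' x ≤ 0 := by
  have hD : ∀ y ∈ Icc 0 π, HasDerivAt φ' (schrodingerPotential s lam y * φ y) y :=
    fun y hy => (h.solves y hy).2
  rcases le_total (schrodingerPotential s lam x) 0 with hq | hq
  · have hanti : AntitoneOn φ' (Icc 0 x) := antitoneOn_Icc_of_hasDerivAt_nonpos
      (fun y hy => hD y ⟨hy.1, hy.2.trans hx.2⟩) fun y hy =>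
        mul_nonpos_of_nonpos_of_nonneg
          ((schrodingerPotential_le_of_le hy.1.le hx.2 hy.2.le).trans hq)
          (h.pos y ⟨hy.1.le, hy.2.le.trans hx.2⟩).le
    simpa [h.deriv_zero] using hanti (left_mem_Icc.2 hx.1) (right_mem_Icc.2 hx.1) hx.1
  · have hmono : MonotoneOn φ' (Icc x π) := monotoneOn_Icc_of_hasDerivAt_nonneg
      (fun y hy => hD y ⟨hx.1.trans hy.1, hy.2⟩) fun y hy =>
        mul_nonneg (hq.trans (schrodingerPotential_le_of_le hx.1 hy.2.le hy.1.le))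
          (h.pos y ⟨hx.1.trans hy.1.le, hy.2.le⟩).le
    simpa [h.deriv_pi] using hmono (left_mem_Icc.2 hx.2) (right_mem_Icc.2 hx.2) hx.2

theorem antitoneOn : AntitoneOn φ (Icc 0 π) :=
  antitoneOn_Icc_of_hasDerivAt_nonpos (fun _ hx => h.solves.hasDerivAt hx)
    fun _ hx => h.deriv_nonpos (Ioo_subset_Icc_self hx)

theorem le_one {x : ℝ} (hx : x ∈ Icc 0 π) : φ x ≤ 1 := by
  simpa [h.apply_zero] using h.antitoneOn (left_mem_Icc.2 pi_pos.le) hx hx.1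

/-- Since `φ ≤ 1`, `φ'' ≥ -λ φ / 2 ≥ -λ / 2`; integrate twice from `0`. -/
theorem one_sub_le (hlam : 0 ≤ lam) {x : ℝ} (hx : x ∈ Icc 0 π) :
    1 - lam * x ^ 2 / 4 ≤ φ x := by
  have hderiv : ∀ y ∈ Icc 0 π, -(lam * y / 2) ≤ φ' y := by
    have hmono : MonotoneOn (fun y => φ' y + lam * y / 2) (Icc 0 π) :=
      monotoneOn_Icc_of_hasDerivAt_nonneg
        (fun y hy => (h.solves y hy).2.add (((hasDerivAt_id' y).const_mul lam).div_const 2))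
        fun y hy => by
          have hφ := h.pos y (Ioo_subset_Icc_self hy)
          have hφ1 := h.le_one (Ioo_subset_Icc_self hy)
          have hV : 0 ≤ Vfun y := sub_nonneg.2 (cos_le_one y)
          unfold schrodingerPotential
          nlinarith [mul_nonneg (mul_nonneg (sq_nonneg s) hV) hφ.le,
            mul_nonneg hlam (sub_nonneg.2 hφ1)]
    intro y hy
    have := hmono (left_mem_Icc.2 pi_pos.le) hy hy.1
    simp only [h.deriv_zero] at this
    linarith
  have hmono : MonotoneOn (fun y => φ y + lam * y ^ 2 / 4) (Icc 0 π) :=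
    monotoneOn_Icc_of_hasDerivAt_nonneg
      (fun y hy =>
        (h.solves.hasDerivAt hy).add (((hasDerivAt_pow 2 y).const_mul lam).div_const 4))
      fun y hy => by
        have := hderiv y (Ioo_subset_Icc_self hy)
        simp only [Nat.cast_ofNat]
        nlinarith
  have := hmono (left_mem_Icc.2 pi_pos.le) hx hx.1
  simp only [h.apply_zero] at this
  linarith

/-- The Wronskian decreases to its value at `π`, which is positive as `φ'(π) = 0 > ψ'(π)`. -/
theorem monotoneOn_div_gaussian {b c : ℝ} (hb : 0 < b) (hc : 0 ≤ c)
    (hqr : ∀ x ∈ Ioo c π, schrodingerPotential s lam x ≤ 4 * b ^ 2 * x ^ 2 - 2 * b) :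
    MonotoneOn (fun x => φ x / exp (-(b * x ^ 2))) (Icc c π) := by
  have hsub : Icc c π ⊆ Icc 0 π := Icc_subset_Icc_left hc
  have hψ := (solvesSchrodinger_gaussian b).mono (subset_univ (Icc c π))
  have hanti := (h.solves.mono hsub).antitoneOn_wronskian hψ hqr
    fun x hx => (mul_pos (h.pos x (hsub (Ioo_subset_Icc_self hx))) (exp_pos _)).le
  refine monotoneOn_div_of_wronskian_nonneg (fun x hx => h.solves.hasDerivAt (hsub hx))
    (fun x hx => hψ.hasDerivAt hx) (fun x _ => (exp_pos _).ne') fun x hx => ?_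
  exact (h.wronskian_gaussian_pi_pos hb).le.trans
    (hanti (Ioo_subset_Icc_self hx) (right_mem_Icc.2 (hx.1.trans hx.2).le) hx.2.le)

/-- The Wronskian increases to its value at `π`, which is `0` as `φ'(π) = 0 = ψ'(π)`. -/
theorem antitoneOn_div_cosh {m c : ℝ} (hc : 0 ≤ c)
    (hqr : ∀ x ∈ Ioo c π, m ^ 2 ≤ schrodingerPotential s lam x) :
    AntitoneOn (fun x => φ x / cosh (m * (π - x))) (Icc c π) := by
  have hsub : Icc c π ⊆ Icc 0 π := Icc_subset_Icc_left hc
  have hψ := (solvesSchrodinger_cosh m π).mono (subset_univ (Icc c π))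
  have hmono := (h.solves.mono hsub).monotoneOn_wronskian hψ hqr
    fun x hx => (mul_pos (h.pos x (hsub (Ioo_subset_Icc_self hx))) (cosh_pos _)).le
  have hWπ : wronskian φ φ' (fun x => cosh (m * (π - x)))
      (fun x => -(m * sinh (m * (π - x)))) π = 0 := by
    simp [wronskian, h.deriv_pi]
  refine antitoneOn_div_of_wronskian_nonpos (fun x hx => h.solves.hasDerivAt (hsub hx))
    (fun x hx => hψ.hasDerivAt hx) (fun x _ => (cosh_pos _).ne') fun x hx => ?_
  rw [← hWπ]
  exact hmono (Ioo_subset_Icc_self hx) (right_mem_Icc.2 (hx.1.trans hx.2).le) hx.2.le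

/-- Below `x = s^{-1/2}` use `one_sub_le`; beyond it compare with `exp (-s x²)`. -/
theorem exp_neg_le (hs : 1 ≤ s) {x : ℝ} (hx : x ∈ Icc 0 π) : exp (-1 - s * x ^ 2) ≤ φ x := by
  have hlam := h.lam_pos (by positivity)
  have hlams := h.lam_le (by positivity)
  set c := (√s)⁻¹ with hc_def
  have hc : s * c ^ 2 = 1 := by
    rw [hc_def, inv_pow, sq_sqrt (by positivity), mul_inv_cancel₀ (by positivity)]
  have hc0 : 0 ≤ c := by positivity
  have hcπ : c ≤ π := by
    have : c ≤ 1 := inv_le_one_of_one_le₀ (one_le_sqrt.2 hs)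
    linarith [pi_gt_three]
  have hexp1 : exp (-1) ≤ 1 / 2 := by
    rw [exp_neg, one_div]
    exact inv_anti₀ two_pos (by linarith [add_one_le_exp 1])
  have hnear : ∀ y ∈ Icc 0 c, 1 / 2 ≤ φ y := fun y hy => by
    have := h.one_sub_le hlam.le ⟨hy.1, hy.2.trans hcπ⟩
    nlinarith [mul_le_mul hlams (pow_le_pow_left₀ hy.1 hy.2 2) (sq_nonneg y) (by positivity)]
  rcases le_total x c with hxc | hxc
  · calc exp (-1 - s * x ^ 2) ≤ exp (-1) := exp_le_exp.2 (by nlinarith [sq_nonneg x])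
      _ ≤ φ x := hexp1.trans (hnear x ⟨hx.1, hxc⟩)
  have hmono := h.monotoneOn_div_gaussian (b := s) (c := c) (by positivity) hc0 fun y hy => by
    have := one_sub_sq_div_two_le_cos (x := y)
    have hy2 : 1 ≤ s * y ^ 2 := hc ▸ mul_le_mul_of_nonneg_left
      (pow_le_pow_left₀ hc0 hy.1.le 2) (by positivity)
    unfold schrodingerPotential Vfun
    nlinarith [sq_nonneg s]
  have hratio : φ c / exp (-(s * c ^ 2)) ≤ φ x / exp (-(s * x ^ 2)) :=
    hmono (left_mem_Icc.2 (hxc.trans hx.2)) ⟨hxc, hx.2⟩ hxc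
  have hψc : exp (-(s * c ^ 2)) ≤ 1 := exp_le_one_iff.2 (by rw [hc]; norm_num)
  have hφc : exp (-1) ≤ φ c / exp (-(s * c ^ 2)) :=
    hexp1.trans ((hnear c (right_mem_Icc.2 hc0)).trans
      (le_div_self (h.pos c ⟨hc0, hcπ⟩).le (exp_pos _) hψc))
  rw [le_div_iff₀ (exp_pos _)] at hratio
  calc exp (-1 - s * x ^ 2) = exp (-1) * exp (-(s * x ^ 2)) := by rw [← exp_add]; ring_nf
    _ ≤ φ c / exp (-(s * c ^ 2)) * exp (-(s * x ^ 2)) := by gcongr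
    _ ≤ φ x := hratio

/-- For `x` beyond `2π s^{-1/2}`, compare on `[x / 2, π]` with `cosh (m (π - y))`,
`m = s x / (4π)`, which the potential dominates there since `1 - cos y ≥ 2 y² / π²`. -/
theorem le_exp (hs : 0 < s) {x : ℝ} (hx : x ∈ Icc 0 π) :
    φ x ≤ exp (π / 2 - s * x ^ 2 / (8 * π)) := by
  have hlams := h.lam_le hs
  have hπ := pi_pos
  have htwo : 2 ≤ exp (π / 2) := by linarith [add_one_le_exp (π / 2), pi_gt_three]
  rcases le_total (s * x ^ 2) (4 * π ^ 2) with hsmall | hlarge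
  · refine (h.le_one hx).trans (one_le_exp ?_)
    rw [sub_nonneg, div_le_iff₀ (by positivity)]
    nlinarith
  set m := s * x / (4 * π) with hm
  have hanti := h.antitoneOn_div_cosh (m := m) (c := x / 2) (by linarith [hx.1]) fun y hy => by
    have hy0 : 0 ≤ y := by linarith [hx.1, hy.1]
    have hcos := cos_le_one_sub_mul_cos_sq (x := y) (by rw [abs_of_nonneg hy0]; exact hy.2.le)
    have hxy : s ^ 2 * x ^ 2 / 4 ≤ s ^ 2 * y ^ 2 := by
      nlinarith [pow_le_pow_left₀ (by linarith [hx.1]) hy.1.le 2, sq_nonneg s]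
    have hπ2 : 0 < π ^ 2 := by positivity
    unfold schrodingerPotential Vfun
    rw [hm, div_pow, mul_pow, div_le_iff₀ (by positivity)]
    have h2 : 2 / π ^ 2 * y ^ 2 * π ^ 2 = 2 * y ^ 2 := by field_simp
    nlinarith [mul_le_mul_of_nonneg_left (sub_le_sub_left hcos 1) (sq_nonneg s),
      mul_le_mul_of_nonneg_left hlams hπ2.le]
  have hx2 : x / 2 ∈ Icc 0 π := ⟨by linarith [hx.1], by linarith [hx.2, hx.1]⟩
  have hratio : φ x / cosh (m * (π - x)) ≤ φ (x / 2) / cosh (m * (π - x / 2)) :=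
    hanti ⟨le_rfl, hx2.2⟩ ⟨by linarith [hx.1], hx.2⟩ (by linarith [hx.1])
  have hφ : φ x ≤ cosh (m * (π - x)) / cosh (m * (π - x / 2)) := by
    have h1 := hratio.trans (div_le_div_of_nonneg_right (h.le_one hx2) (cosh_pos _).le)
    rwa [div_le_iff₀ (cosh_pos _), div_mul_eq_mul_div, one_mul] at h1
  have hm0 : 0 ≤ m := div_nonneg (mul_nonneg hs.le hx.1) (by positivity)
  refine hφ.trans ((cosh_div_cosh_le (mul_nonneg hm0 (by linarith [hx.2]))).trans ?_)
  calc 2 * exp (m * (π - x) - m * (π - x / 2)) = 2 * exp (-(s * x ^ 2 / (8 * π))) := by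
        rw [hm]; field_simp; ring_nf
    _ ≤ exp (π / 2) * exp (-(s * x ^ 2 / (8 * π))) := by gcongr
    _ = exp (π / 2 - s * x ^ 2 / (8 * π)) := by rw [← exp_add]; ring_nf

end IsGroundState

namespace SolvesE

variable {κ a lam : ℝ} {u : ℝ → ℝ}

theorem deriv_zero (hu : SolvesE κ a u lam) : deriv u 0 = 0 := by
  have h := deriv_comp_neg (f := u) (x := 0)
  rw [funext hu.2.1, neg_zero] at h
  linarith

theorem isGroundState (hu : SolvesE κ a u lam) (hK : 0 ≤ κ * (1 - a)) :
    IsGroundState √(κ * (1 - a)) lam (fun x => exp (-u x / 2))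
      (fun x => exp (-u x / 2) * (-deriv u x / 2)) := by
  have hu' := hu.deriv_zero
  obtain ⟨hC2, -, hu0, hπ, -, hode⟩ := hu
  have hφ : ∀ x, HasDerivAt (fun y => exp (-u y / 2)) (exp (-u x / 2) * (-deriv u x / 2)) x :=
    fun x => ((hC2.differentiable (by norm_num) x).hasDerivAt.neg.div_const 2).exp
  refine ⟨fun x hx => ⟨hφ x, ?_⟩, fun x _ => exp_pos _, by simp [hu0], by simp [hu'],
    by simp [hπ]⟩
  have hode := hode x ⟨by linarith [hx.1, pi_pos], hx.2⟩
  refine ((hφ x).mul ((hC2.differentiable_deriv_two x).hasDerivAt.neg.div_const 2)).congr_deriv ?_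
  rw [schrodingerPotential, sq_sqrt hK, Pi.neg_apply]
  linear_combination (exp (-u x / 2) / 2) * hode

theorem growth_bounds (hu : SolvesE κ a u lam) (hK : 1 ≤ κ * (1 - a)) {x : ℝ}
    (hx : x ∈ Icc (-π) π) :
    √(κ * (1 - a)) * x ^ 2 / (4 * π) - π ≤ u x ∧ u x ≤ 2 * √(κ * (1 - a)) * x ^ 2 + 2 := by
  have hs : 1 ≤ √(κ * (1 - a)) := one_le_sqrt.2 hK
  have hG := hu.isGroundState (by linarith)
  have habs : |x| ∈ Icc 0 π := ⟨abs_nonneg x, abs_le.2 hx⟩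
  have hux : u |x| = u x := by rcases abs_choice x with h | h <;> simp [h, hu.2.1]
  have hup := hG.le_exp (by positivity) habs
  have hlo := hG.exp_neg_le hs habs
  simp only [hux, sq_abs, exp_le_exp] at hup hlo
  have h8π : √(κ * (1 - a)) * x ^ 2 / (4 * π) = 2 * (√(κ * (1 - a)) * x ^ 2 / (8 * π)) := by
    field_simp; ring
  constructor <;> linarith

end SolvesE

/-- Quadratic growth bounds for `u_a`: `c₁ κ^(1/2) x² - c₃ ≤ u(x) ≤ c₂ κ^(1/2) x² + c₃`
on `[-π, π]`, with `c₂, c₃` independent of `δ` and `κ`, and `c₁ = c₁(δ)`. -/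
theorem quadratic_growth_bounds :
    ∃ c₂ : ℝ, 0 < c₂ ∧ ∃ c₃ : ℝ, 0 < c₃ ∧
      ∀ δ ∈ Set.Ioo (0 : ℝ) 1, ∃ κt : ℝ, 1 ≤ κt ∧ ∃ c₁ : ℝ, 0 < c₁ ∧
        ∀ κ : ℝ, κt ≤ κ → ∀ a ∈ Set.Icc (0 : ℝ) (1 - δ),
          ∀ (u : ℝ → ℝ) (lam : ℝ), SolvesE κ a u lam →
            ∀ x ∈ Set.Icc (-π) π,
              c₁ * κ ^ ((1 : ℝ) / 2) * x ^ 2 - c₃ ≤ u x ∧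
              u x ≤ c₂ * κ ^ ((1 : ℝ) / 2) * x ^ 2 + c₃ := by
  refine ⟨2, two_pos, 4, four_pos, fun δ ⟨hδ0, hδ1⟩ =>
    ⟨1 / δ, one_le_one_div hδ0 hδ1.le, √δ / (4 * π), by positivity, ?_⟩⟩
  intro κ hκ a ha u lam hu x hx
  have hκδ : 1 ≤ κ * δ := (div_le_iff₀ hδ0).1 hκ
  have hκ0 : 0 ≤ κ := by nlinarith
  have hK : κ * δ ≤ κ * (1 - a) := mul_le_mul_of_nonneg_left (by linarith [ha.2]) hκ0
  obtain ⟨hlo, hup⟩ := hu.growth_bounds (hκδ.trans hK) hx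
  have hle : √(κ * (1 - a)) ≤ √κ := sqrt_le_sqrt (by nlinarith [ha.1])
  have hge : √δ * √κ ≤ √(κ * (1 - a)) := by
    rw [← sqrt_mul hδ0.le, mul_comm]; exact sqrt_le_sqrt hK
  rw [← sqrt_eq_rpow]
  constructor
  · calc √δ / (4 * π) * √κ * x ^ 2 - 4 ≤ √(κ * (1 - a)) * x ^ 2 / (4 * π) - π := by
          rw [div_mul_eq_mul_div, div_mul_eq_mul_div]
          gcongr
          · exact pi_lt_four.le
      _ ≤ u x := hlo
  · nlinarith [sq_nonneg x]
end

section
/- There exists τ₀ ∈ (0, 1) such that for every κ > 4 and every τ ∈ (0, τ₀], setting a = 1 − τ/κ, the following hold for any solution (u, λ) of the ergodic equation E(κ, a) with density m and any solution (v, λ′) of the linearized equation L(κ, a) along (u, λ): (i) (1/κ) ∫_{−π}^{π} (v'(y))² m(y) dy ≥ κ/4; (ii) ∫_{−π}^{π} V(y) m(y) dy ≤ 1 − τ/4 < a. Consequently, a = 1 is the only a ∈ [1 − τ₀/κ, 1 + τ₀/κ] for which a solution of E(κ, a) satisfies ∫_{−π}^{π} V(y) m(y) dy = a. -/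
open Real

open MeasureTheory intervalIntegral


lemma FPaux_pi_le : (-π : ℝ) ≤ π := by linarith [Real.pi_pos]

lemma FPaux_int_one : ∫ _x in (-π)..π, (1:ℝ) = 2*π := by
  rw [intervalIntegral.integral_const, smul_eq_mul]; ring

lemma FPaux_int_const (c : ℝ) : ∫ _x in (-π)..π, c = (2*π)*c := by
  rw [intervalIntegral.integral_const, smul_eq_mul]; ring

lemma FPaux_int_cos : ∫ x in (-π)..π, Real.cos x = 0 := by simp

lemma FPaux_int_V : ∫ x in (-π)..π, Vfun x = 2*π := by
  unfold Vfun
  rw [intervalIntegral.integral_sub (continuous_const.intervalIntegrable _ _)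
    (Real.continuous_cos.intervalIntegrable _ _), FPaux_int_one, FPaux_int_cos]
  ring

lemma FPaux_int_cos_sq : ∫ x in (-π)..π, (Real.cos x)^2 = π := by
  rw [integral_cos_sq]; simp

lemma FPaux_int_Vcos : ∫ x in (-π)..π, Vfun x * Real.cos x = -π := by
  rw [intervalIntegral.integral_congr (g := fun x => Real.cos x - (Real.cos x)^2)
    (fun x _ => by unfold Vfun; ring)]
  rw [intervalIntegral.integral_sub (Real.continuous_cos.intervalIntegrable _ _)
    ((Real.continuous_cos.fun_pow 2).intervalIntegrable _ _), FPaux_int_cos, FPaux_int_cos_sq]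
  ring


lemma FPaux_exp_lb {x : ℝ} (hx : |x| ≤ 1/100) : 99/100 ≤ Real.exp x := by
  have h := Real.add_one_le_exp (-(1/100) : ℝ)
  have h2 : Real.exp (-(1/100)) ≤ Real.exp x := by
    apply Real.exp_le_exp.mpr; have := (abs_le.mp hx).1; linarith
  linarith

lemma FPaux_exp_ub {x : ℝ} (hx : |x| ≤ 1/100) : Real.exp x ≤ 100/99 := by
  have h1 : Real.exp x ≤ Real.exp (1/100) := Real.exp_le_exp.mpr (abs_le.mp hx).2
  have h : (99/100 : ℝ) ≤ Real.exp (-(1/100)) := by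
    have := Real.add_one_le_exp (-(1/100) : ℝ); linarith
  rw [Real.exp_neg] at h
  have hp := Real.exp_pos (1/100 : ℝ)
  have hEE : Real.exp (1/100) * (Real.exp (1/100))⁻¹ = 1 := mul_inv_cancel₀ hp.ne'
  nlinarith [h, hp, hEE]






lemma FPaux_int_sin_sq : ∫ x in (-π)..π, (Real.sin x)^2 = π := by
  rw [integral_sin_sq]; simp

lemma FPaux_cs (f g w : ℝ → ℝ) (hf : Continuous f) (hg : Continuous g) (hw : Continuous w)
    (hw0 : ∀ x, 0 ≤ w x) :
    (∫ x in (-π)..π, f x * g x * w x)^2 ≤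
      (∫ x in (-π)..π, (f x)^2 * w x) * (∫ x in (-π)..π, (g x)^2 * w x) := by
  set A := ∫ x in (-π)..π, (f x)^2 * w x with hA
  set B := ∫ x in (-π)..π, f x * g x * w x with hB
  set Cc := ∫ x in (-π)..π, (g x)^2 * w x with hC
  have key : ∀ t : ℝ, 0 ≤ A * (t*t) + (-2*B) * t + Cc := by
    intro t
    have h0 : 0 ≤ ∫ x in (-π)..π, (t * f x - g x)^2 * w x :=
      intervalIntegral.integral_nonneg FPaux_pi_le (fun x _ => mul_nonneg (sq_nonneg _) (hw0 x))
    have hrw : (∫ x in (-π)..π, (t * f x - g x)^2 * w x)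
        = (t*t) * A + (-2*t) * B + Cc := by
      rw [intervalIntegral.integral_congr
        (g := fun x => (t*t) * ((f x)^2 * w x) + ((-2*t) * (f x * g x * w x) + (g x)^2 * w x))
        (fun x _ => by ring)]
      rw [intervalIntegral.integral_add, intervalIntegral.integral_add,
        intervalIntegral.integral_const_mul, intervalIntegral.integral_const_mul]
      · ring
      · exact (continuous_const.fun_mul ((hf.fun_mul hg).fun_mul hw)).intervalIntegrable _ _
      · exact (((hg.fun_pow 2).fun_mul hw)).intervalIntegrable _ _
      · exact (continuous_const.fun_mul ((hf.fun_pow 2).fun_mul hw)).intervalIntegrable _ _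
      · exact ((continuous_const.fun_mul ((hf.fun_mul hg).fun_mul hw)).intervalIntegrable _ _).add
          ((((hg.fun_pow 2).fun_mul hw)).intervalIntegrable _ _)
    nlinarith [h0, hrw]
  have hd := discrim_le_zero key
  simp only [discrim] at hd
  nlinarith [hd]


lemma FPaux_cd (u : ℝ → ℝ) (hu : ContDiff ℝ 2 u) :
    Continuous u ∧ Continuous (deriv u) ∧ Continuous (deriv (deriv u)) ∧
    (∀ x, HasDerivAt u (deriv u x) x) ∧ (∀ x, HasDerivAt (deriv u) (deriv (deriv u) x) x) := by
  have h2 : ContDiff ℝ ((1:ℕ) + 1) u := by exact_mod_cast hu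
  have hd1 : ContDiff ℝ 1 (deriv u) := (contDiff_succ_iff_deriv.mp h2).2.2
  refine ⟨hu.continuous, hd1.continuous, hd1.continuous_deriv le_rfl, ?_, ?_⟩
  · exact fun x => ((hu.differentiable (by norm_num)) x).hasDerivAt
  · exact fun x => ((hd1.differentiable (by norm_num)) x).hasDerivAt


set_option maxHeartbeats 1600000 in
lemma FPaux_E_ids (τ : ℝ) (u : ℝ → ℝ) (lam : ℝ)
    (hu : ContDiff ℝ 2 u) (hu0 : u 0 = 0)
    (hbp : deriv u π = 0) (hbm : deriv u (-π) = 0)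
    (heq : ∀ x ∈ Set.Icc (-π) π,
      -(deriv (deriv u) x) + (1/2) * (deriv u x)^2 + lam = τ * Vfun x)
    (hτs : |τ| ≤ 1/1000000) :
    0 ≤ (∫ y in (-π)..π, (deriv u y)^2) ∧
    0 ≤ (∫ y in (-π)..π, (deriv u y)^2 * Real.exp (-u y)) ∧
    0 ≤ (∫ y in (-π)..π, Vfun y * Real.exp (-u y)) ∧
    lam * (4*π) = τ * (4*π) - (∫ y in (-π)..π, (deriv u y)^2) ∧
    lam * (∫ y in (-π)..π, Real.exp (-u y))
      = τ * (∫ y in (-π)..π, Vfun y * Real.exp (-u y))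
        + (∫ y in (-π)..π, (deriv u y)^2 * Real.exp (-u y)) / 2 ∧
    (99/100) * π * τ^2 ≤ (∫ y in (-π)..π, (deriv u y)^2) ∧
    (∀ x ∈ Set.Icc (-π) π, (u x)^2 ≤ 2*π*(∫ y in (-π)..π, (deriv u y)^2)) := by
  obtain ⟨hcu, hcu1, hcu2, hD1, hD2⟩ := FPaux_cd u hu
  have hle := FPaux_pi_le
  have hcV : Continuous Vfun := continuous_const.sub Real.continuous_cos
  have hexpc : Continuous (fun x => Real.exp (-u x)) := Real.continuous_exp.comp hcu.neg
  set S := ∫ y in (-π)..π, (deriv u y)^2 with hS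
  set P := ∫ y in (-π)..π, (deriv u y)^2 * Real.exp (-u y) with hP
  set I := ∫ y in (-π)..π, Real.exp (-u y) with hI
  set W := ∫ y in (-π)..π, Vfun y * Real.exp (-u y) with hW
  have hS0 : 0 ≤ S := intervalIntegral.integral_nonneg hle (fun x _ => sq_nonneg _)
  have hP0 : 0 ≤ P := intervalIntegral.integral_nonneg hle
    (fun x _ => mul_nonneg (sq_nonneg _) (Real.exp_pos _).le)
  have hV0 : ∀ x : ℝ, 0 ≤ Vfun x := fun x => by
    have := Real.cos_le_one x; unfold Vfun; linarith
  have hW0 : 0 ≤ W := intervalIntegral.integral_nonneg hle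
    (fun x _ => mul_nonneg (hV0 x) (Real.exp_pos _).le)
  -- id1 : integrate the equation with weight 1
  have hid1 : lam * (4*π) = τ * (4*π) - S := by
    have ftc1 : (∫ y in (-π)..π, deriv (deriv u) y) = 0 := by
      rw [integral_eq_sub_of_hasDerivAt (fun x _ => hD2 x) (hcu2.intervalIntegrable _ _),
        hbp, hbm]; ring
    have hint1 : (∫ y in (-π)..π, (-(deriv (deriv u) y) + ((1/2) * (deriv u y)^2 + lam)))
        = ∫ y in (-π)..π, τ * Vfun y := by
      apply intervalIntegral.integral_congr
      intro x hx
      rw [Set.uIcc_of_le hle] at hx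
      have := heq x hx; dsimp only; linarith
    rw [intervalIntegral.integral_add (hcu2.fun_neg.intervalIntegrable _ _)
        (((continuous_const.fun_mul (hcu1.fun_pow 2)).fun_add continuous_const).intervalIntegrable _ _),
      intervalIntegral.integral_add ((continuous_const.fun_mul (hcu1.fun_pow 2)).intervalIntegrable _ _)
        (continuous_const.intervalIntegrable _ _),
      intervalIntegral.integral_neg, ftc1, intervalIntegral.integral_const_mul, intervalIntegral.integral_const_mul,
      FPaux_int_const, FPaux_int_V, ← hS] at hint1
    linarith
  -- id2 : integrate the equation with weight exp(-u)
  have h2a : (∫ y in (-π)..π, deriv (deriv u) y * Real.exp (-u y)) = P := by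
    have ftc2 : (∫ y in (-π)..π, (deriv (deriv u) y * Real.exp (-u y)
        + deriv u y * (Real.exp (-u y) * -(deriv u y)))) = 0 := by
      rw [integral_eq_sub_of_hasDerivAt
        (f := fun x => deriv u x * Real.exp (-u x))
        (fun x _ => (hD2 x).mul ((hD1 x).fun_neg.exp))
        (((hcu2.fun_mul hexpc).fun_add (hcu1.fun_mul (hexpc.fun_mul hcu1.fun_neg))).intervalIntegrable _ _),
        hbp, hbm]; ring
    have hsplit : (∫ y in (-π)..π, (deriv (deriv u) y * Real.exp (-u y)
        + deriv u y * (Real.exp (-u y) * -(deriv u y))))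
        = (∫ y in (-π)..π, deriv (deriv u) y * Real.exp (-u y)) - P := by
      rw [intervalIntegral.integral_congr
        (g := fun y => deriv (deriv u) y * Real.exp (-u y) - (deriv u y)^2 * Real.exp (-u y))
        (fun x _ => by dsimp only; ring)]
      exact intervalIntegral.integral_sub ((hcu2.mul hexpc).intervalIntegrable _ _)
        (((hcu1.pow 2).mul hexpc).intervalIntegrable _ _)
    linarith [ftc2, hsplit]
  have hid2 : lam * I = τ * W + P / 2 := by
    have hint2 : (∫ y in (-π)..π, (-(deriv (deriv u) y * Real.exp (-u y))
          + ((1/2) * ((deriv u y)^2 * Real.exp (-u y)) + lam * Real.exp (-u y))))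
        = ∫ y in (-π)..π, τ * (Vfun y * Real.exp (-u y)) := by
      apply intervalIntegral.integral_congr
      intro x hx
      rw [Set.uIcc_of_le hle] at hx
      have h := heq x hx
      dsimp only
      nlinarith [Real.exp_pos (-u x), h]
    rw [intervalIntegral.integral_add ((hcu2.fun_mul hexpc).fun_neg.intervalIntegrable _ _)
        (((continuous_const.fun_mul ((hcu1.fun_pow 2).fun_mul hexpc)).fun_add
          (continuous_const.fun_mul hexpc)).intervalIntegrable _ _),
      intervalIntegral.integral_add
        ((continuous_const.fun_mul ((hcu1.fun_pow 2).fun_mul hexpc)).intervalIntegrable _ _)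
        ((continuous_const.fun_mul hexpc).intervalIntegrable _ _),
      intervalIntegral.integral_neg, h2a, intervalIntegral.integral_const_mul, intervalIntegral.integral_const_mul,
      intervalIntegral.integral_const_mul, ← hP, ← hI, ← hW] at hint2
    linarith
  clear_value S P I W
  refine ⟨hS0, hP0, hW0, hid1, hid2, ?_, ?_⟩
  · -- S lower bound
    set J := ∫ y in (-π)..π, deriv u y * Real.sin y with hJdef
    set K := ∫ y in (-π)..π, (deriv u y)^2 * Real.cos y with hKdef
    have h3a : (∫ y in (-π)..π, deriv (deriv u) y * Real.cos y) = J := by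
      have ftc3 : (∫ y in (-π)..π, (deriv (deriv u) y * Real.cos y
          + deriv u y * -(Real.sin y))) = 0 := by
        rw [integral_eq_sub_of_hasDerivAt
          (f := fun x => deriv u x * Real.cos x)
          (fun x _ => (hD2 x).mul (Real.hasDerivAt_cos x))
          (((hcu2.fun_mul Real.continuous_cos).fun_add
            (hcu1.fun_mul Real.continuous_sin.fun_neg)).intervalIntegrable _ _), hbp, hbm]
        ring
      have hsplit : (∫ y in (-π)..π, (deriv (deriv u) y * Real.cos y
          + deriv u y * -(Real.sin y)))
          = (∫ y in (-π)..π, deriv (deriv u) y * Real.cos y) - J := by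
        rw [intervalIntegral.integral_congr
          (g := fun y => deriv (deriv u) y * Real.cos y - deriv u y * Real.sin y)
          (fun x _ => by dsimp only; ring)]
        exact intervalIntegral.integral_sub
          ((hcu2.mul Real.continuous_cos).intervalIntegrable _ _)
          ((hcu1.mul Real.continuous_sin).intervalIntegrable _ _)
      linarith [ftc3, hsplit]
    have hid3 : J = τ * π + K / 2 := by
      have hint3 : (∫ y in (-π)..π, (-(deriv (deriv u) y * Real.cos y)
            + ((1/2) * ((deriv u y)^2 * Real.cos y) + lam * Real.cos y)))
          = ∫ y in (-π)..π, τ * (Vfun y * Real.cos y) := by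
        apply intervalIntegral.integral_congr
        intro x hx
        rw [Set.uIcc_of_le hle] at hx
        have h := heq x hx
        dsimp only
        linear_combination Real.cos x * h
      rw [intervalIntegral.integral_add ((hcu2.fun_mul Real.continuous_cos).fun_neg.intervalIntegrable _ _)
          (((continuous_const.fun_mul ((hcu1.fun_pow 2).fun_mul Real.continuous_cos)).fun_add
            (continuous_const.fun_mul Real.continuous_cos)).intervalIntegrable _ _),
        intervalIntegral.integral_add
          ((continuous_const.fun_mul ((hcu1.fun_pow 2).fun_mul Real.continuous_cos)).intervalIntegrable _ _)
          ((continuous_const.fun_mul Real.continuous_cos).intervalIntegrable _ _),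
        intervalIntegral.integral_neg, h3a, intervalIntegral.integral_const_mul, intervalIntegral.integral_const_mul,
        intervalIntegral.integral_const_mul, FPaux_int_cos, FPaux_int_Vcos, ← hKdef] at hint3
      linarith
    have hKS : |K| ≤ S := by
      have h1 : |K| ≤ ∫ y in (-π)..π, |(deriv u y)^2 * Real.cos y| :=
        intervalIntegral.abs_integral_le_integral_abs hle
      have h2 : (∫ y in (-π)..π, |(deriv u y)^2 * Real.cos y|)
          ≤ ∫ y in (-π)..π, (deriv u y)^2 := by
        apply intervalIntegral.integral_mono_on hle
          (((hcu1.fun_pow 2).fun_mul Real.continuous_cos).abs.intervalIntegrable _ _)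
          ((hcu1.fun_pow 2).intervalIntegrable _ _)
        intro x _
        rw [abs_mul, abs_of_nonneg (sq_nonneg _)]
        nlinarith [abs_cos_le_one x, sq_nonneg (deriv u x), abs_nonneg (Real.cos x)]
      rw [hS]
      linarith
    have hcs : J^2 ≤ S * π := by
      have h := FPaux_cs (deriv u) Real.sin (fun _ => (1:ℝ)) hcu1 Real.continuous_sin
        continuous_const (fun _ => zero_le_one)
      simp only [mul_one] at h
      rwa [FPaux_int_sin_sq, ← hJdef, ← hS] at h
    clear_value J K
    by_contra hSb
    push_neg at hSb
    clear hS hP hI hW hJdef hKdef h2a h3a heq hid1 hid2 hD1 hD2 hcu hcu1 hcu2 hcV hexpc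
    clear hu hu0 hbp hbm hW0 hP0
    have hτ2 : τ^2 ≤ |τ| * (1/1000000) := by nlinarith [abs_nonneg τ, sq_abs τ]
    have hπ : (3.14:ℝ) < π := by linarith [Real.pi_gt_d6]
    have hπ' : π < 3.15 := by linarith [Real.pi_lt_d2]
    have habs : |τ| * π - S/2 ≤ |J| := by
      have h1 : |τ * π - J| ≤ S/2 := by
        have e : τ * π - J = -(K/2) := by rw [hid3]; ring
        have e2 : |K/2| = |K|/2 := by rw [abs_div]; norm_num
        rw [e, abs_neg, e2]
        linarith [hKS]
      have h2 : |τ * π| - |J| ≤ |τ * π - J| := abs_sub_abs_le_abs_sub _ _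
      rw [abs_mul, abs_of_pos Real.pi_pos] at h2
      linarith
    have t0 : (0:ℝ) ≤ |τ| := abs_nonneg τ
    have hstep : (99/100)*π*τ^2 ≤ (99/100)*π*(|τ| * (1/1000000)) :=
      mul_le_mul_of_nonneg_left hτ2 (by positivity)
    have hpos : 0 ≤ |τ| * π - S/2 := by nlinarith [hSb, hstep, Real.pi_pos]
    have hJsq : (|τ| * π - S/2)^2 ≤ J^2 := by
      have := pow_le_pow_left₀ hpos habs 2
      rwa [sq_abs] at this
    have e1 : |τ|^2 * π^2 - |τ| * π * S + S^2/4 ≤ S*π := by nlinarith [hJsq.trans hcs]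
    have e2 : |τ|^2 * π ≤ S*(1+|τ|) := by nlinarith [e1, Real.pi_pos, sq_nonneg S]
    have e3 : S < (99/100) * π * (|τ| * |τ|) := by nlinarith [hSb, sq_abs τ]
    nlinarith [e2, e3, t0, hτs, hS0, hπ, hπ', mul_nonneg t0 t0]
  · -- oscillation bound
    intro x hx
    have hA2 : (∫ y in (-π)..π, |deriv u y|)^2
        ≤ (∫ y in (-π)..π, (deriv u y)^2) * (2*π) := by
      have h := FPaux_cs (fun y => |deriv u y|) (fun _ => (1:ℝ)) (fun _ => (1:ℝ))
        hcu1.abs continuous_const continuous_const (fun _ => zero_le_one)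
      simp only [mul_one, one_pow] at h
      rw [FPaux_int_one] at h
      have heqS : (∫ y in (-π)..π, |deriv u y|^2) = ∫ y in (-π)..π, (deriv u y)^2 :=
        intervalIntegral.integral_congr (fun y _ => sq_abs _)
      rwa [heqS] at h
    have hftc : (∫ y in (0:ℝ)..x, deriv u y) = u x := by
      rw [integral_eq_sub_of_hasDerivAt (fun y _ => hD1 y) (hcu1.intervalIntegrable _ _),
        hu0, sub_zero]
    have hux : |u x| ≤ ∫ y in (-π)..π, |deriv u y| := by
      rcases le_or_gt 0 x with h0x | h0x
      · have h1 : |∫ y in (0:ℝ)..x, deriv u y| ≤ ∫ y in (0:ℝ)..x, |deriv u y| :=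
          intervalIntegral.abs_integral_le_integral_abs h0x
        have h2 : (∫ y in (0:ℝ)..x, |deriv u y|) ≤ ∫ y in (-π)..π, |deriv u y| :=
          intervalIntegral.integral_mono_interval (by linarith [Real.pi_pos]) h0x hx.2
            (Filter.Eventually.of_forall (fun y => abs_nonneg _))
            (hcu1.abs.intervalIntegrable _ _)
        rw [hftc] at h1
        linarith
      · have hsymm : (∫ y in (0:ℝ)..x, deriv u y) = -(∫ y in x..(0:ℝ), deriv u y) :=
          (intervalIntegral.integral_symm _ _)
        have h1 : |∫ y in x..(0:ℝ), deriv u y| ≤ ∫ y in x..(0:ℝ), |deriv u y| :=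
          intervalIntegral.abs_integral_le_integral_abs h0x.le
        have h2 : (∫ y in x..(0:ℝ), |deriv u y|) ≤ ∫ y in (-π)..π, |deriv u y| :=
          intervalIntegral.integral_mono_interval hx.1 h0x.le (by linarith [Real.pi_pos])
            (Filter.Eventually.of_forall (fun y => abs_nonneg _))
            (hcu1.abs.intervalIntegrable _ _)
        rw [hsymm] at hftc
        have h3 : |u x| = |∫ y in x..(0:ℝ), deriv u y| := by
          rw [← hftc, abs_neg]
        rw [h3]
        linarith
    have h4 : (u x)^2 ≤ (∫ y in (-π)..π, (deriv u y)^2) * (2*π) := by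
      calc (u x)^2 = |u x|^2 := (sq_abs _).symm
      _ ≤ (∫ y in (-π)..π, |deriv u y|)^2 := pow_le_pow_left₀ (abs_nonneg _) hux 2
      _ ≤ (∫ y in (-π)..π, (deriv u y)^2) * (2*π) := hA2
    rw [hS]
    linarith


set_option maxHeartbeats 1600000 in
lemma FPaux_L_ids (κ : ℝ) (u v : ℝ → ℝ) (lam' : ℝ)
    (hu : ContDiff ℝ 2 u) (hv : ContDiff ℝ 2 v)
    (hvp : deriv v π = 0) (hvm : deriv v (-π) = 0)
    (heq : ∀ x ∈ Set.Icc (-π) π,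
      -(deriv (deriv v) x) + deriv u x * deriv v x + lam' = -(κ * Vfun x)) :
    lam' * (∫ y in (-π)..π, Real.exp (-u y))
      + κ * (∫ y in (-π)..π, Vfun y * Real.exp (-u y)) = 0 ∧
    (∫ y in (-π)..π, deriv v y * Real.sin y * Real.exp (-u y))
      = lam' * (∫ y in (-π)..π, Real.cos y * Real.exp (-u y))
        + κ * ((∫ y in (-π)..π, Real.cos y * Real.exp (-u y))
          - (∫ y in (-π)..π, (Real.cos y)^2 * Real.exp (-u y))) := by
  obtain ⟨hcu, hcu1, hcu2, hD1, hD2⟩ := FPaux_cd u hu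
  obtain ⟨hcv, hcv1, hcv2, hE1, hE2⟩ := FPaux_cd v hv
  have hle := FPaux_pi_le
  have hcV : Continuous Vfun := continuous_const.sub Real.continuous_cos
  have hexpc : Continuous (fun x => Real.exp (-u x)) := Real.continuous_exp.comp hcu.neg
  -- the divergence-form integrand
  have hgc : Continuous (fun x => deriv (deriv v) x * Real.exp (-u x)
      + deriv v x * (Real.exp (-u x) * -(deriv u x))) :=
    (hcv2.mul hexpc).add (hcv1.mul (hexpc.mul hcu1.neg))
  have hDf : ∀ x : ℝ, HasDerivAt (fun x => deriv v x * Real.exp (-u x))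
      (deriv (deriv v) x * Real.exp (-u x) + deriv v x * (Real.exp (-u x) * -(deriv u x))) x :=
    fun x => (hE2 x).mul ((hD1 x).neg.exp)
  have hptw : ∀ x ∈ Set.Icc (-π) π,
      deriv (deriv v) x * Real.exp (-u x) + deriv v x * (Real.exp (-u x) * -(deriv u x))
        = (lam' + κ * Vfun x) * Real.exp (-u x) := by
    intro x hx
    have h := heq x hx
    have h2 : deriv (deriv v) x - deriv u x * deriv v x = lam' + κ * Vfun x := by linarith
    calc deriv (deriv v) x * Real.exp (-u x) + deriv v x * (Real.exp (-u x) * -(deriv u x))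
        = (deriv (deriv v) x - deriv u x * deriv v x) * Real.exp (-u x) := by ring
    _ = (lam' + κ * Vfun x) * Real.exp (-u x) := by rw [h2]
  -- first identity
  constructor
  · have ftc : (∫ y in (-π)..π, (deriv (deriv v) y * Real.exp (-u y)
        + deriv v y * (Real.exp (-u y) * -(deriv u y)))) = 0 := by
      rw [integral_eq_sub_of_hasDerivAt (fun x _ => hDf x) (hgc.intervalIntegrable _ _),
        hvp, hvm]; ring
    have hcongr : (∫ y in (-π)..π, (deriv (deriv v) y * Real.exp (-u y)
        + deriv v y * (Real.exp (-u y) * -(deriv u y))))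
        = ∫ y in (-π)..π, (lam' * Real.exp (-u y) + κ * (Vfun y * Real.exp (-u y))) := by
      apply intervalIntegral.integral_congr
      intro x hx
      rw [Set.uIcc_of_le hle] at hx
      dsimp only
      rw [hptw x hx]; ring
    rw [hcongr, intervalIntegral.integral_add
        ((continuous_const.fun_mul hexpc).intervalIntegrable _ _)
        ((continuous_const.fun_mul (hcV.fun_mul hexpc)).intervalIntegrable _ _),
      intervalIntegral.integral_const_mul, intervalIntegral.integral_const_mul] at ftc
    linarith
  · -- second identity with weight -cos
    have hDg : ∀ x : ℝ, HasDerivAt (fun x => deriv v x * Real.exp (-u x) * -(Real.cos x))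
        ((deriv (deriv v) x * Real.exp (-u x) + deriv v x * (Real.exp (-u x) * -(deriv u x)))
          * -(Real.cos x) + deriv v x * Real.exp (-u x) * Real.sin x) x := by
      intro x
      have h1 := (hDf x).fun_mul (Real.hasDerivAt_cos x).fun_neg
      exact h1.congr_deriv (by ring)
    have ftc : (∫ y in (-π)..π, ((deriv (deriv v) y * Real.exp (-u y)
        + deriv v y * (Real.exp (-u y) * -(deriv u y))) * -(Real.cos y)
          + deriv v y * Real.exp (-u y) * Real.sin y)) = 0 := by
      rw [integral_eq_sub_of_hasDerivAt (fun x _ => hDg x)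
        (((hgc.fun_mul Real.continuous_cos.fun_neg).fun_add
          ((hcv1.fun_mul hexpc).fun_mul Real.continuous_sin)).intervalIntegrable _ _),
        hvp, hvm]
      simp
    have hcongr : (∫ y in (-π)..π, ((deriv (deriv v) y * Real.exp (-u y)
        + deriv v y * (Real.exp (-u y) * -(deriv u y))) * -(Real.cos y)
          + deriv v y * Real.exp (-u y) * Real.sin y))
        = ∫ y in (-π)..π, (deriv v y * Real.sin y * Real.exp (-u y)
            - (lam' * (Real.cos y * Real.exp (-u y))
              + κ * (Real.cos y * Real.exp (-u y) - (Real.cos y)^2 * Real.exp (-u y)))) := by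
      apply intervalIntegral.integral_congr
      intro x hx
      rw [Set.uIcc_of_le hle] at hx
      have h2 := hptw x hx
      dsimp only
      calc (deriv (deriv v) x * Real.exp (-u x)
          + deriv v x * (Real.exp (-u x) * -(deriv u x))) * -(Real.cos x)
            + deriv v x * Real.exp (-u x) * Real.sin x
          = ((lam' + κ * Vfun x) * Real.exp (-u x)) * -(Real.cos x)
            + deriv v x * Real.exp (-u x) * Real.sin x := by rw [h2]
      _ = deriv v x * Real.sin x * Real.exp (-u x)
            - (lam' * (Real.cos x * Real.exp (-u x))
              + κ * (Real.cos x * Real.exp (-u x) - (Real.cos x)^2 * Real.exp (-u x))) := by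
        unfold Vfun; ring
    rw [hcongr] at ftc
    rw [intervalIntegral.integral_sub (((hcv1.fun_mul Real.continuous_sin).fun_mul hexpc).intervalIntegrable _ _)
        (((continuous_const.fun_mul (Real.continuous_cos.fun_mul hexpc)).fun_add
          (continuous_const.fun_mul ((Real.continuous_cos.fun_mul hexpc).fun_sub
            ((Real.continuous_cos.fun_pow 2).fun_mul hexpc)))).intervalIntegrable _ _),
      intervalIntegral.integral_add
        ((continuous_const.fun_mul (Real.continuous_cos.fun_mul hexpc)).intervalIntegrable _ _)
        ((continuous_const.fun_mul ((Real.continuous_cos.fun_mul hexpc).fun_sub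
            ((Real.continuous_cos.fun_pow 2).fun_mul hexpc))).intervalIntegrable _ _),
      intervalIntegral.integral_const_mul, intervalIntegral.integral_const_mul,
      intervalIntegral.integral_sub ((Real.continuous_cos.fun_mul hexpc).intervalIntegrable _ _)
        (((Real.continuous_cos.fun_pow 2).fun_mul hexpc).intervalIntegrable _ _)] at ftc
    linarith


set_option maxHeartbeats 1600000 in
lemma FPaux_bounds (u : ℝ → ℝ) (hcu : Continuous u) (hcu1 : Continuous (deriv u))
    (hA : ∀ x ∈ Set.Icc (-π) π, |u x| ≤ 1/100) :
    (2*π) * (99/100) ≤ (∫ y in (-π)..π, Real.exp (-u y)) ∧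
    (∫ y in (-π)..π, Real.exp (-u y)) ≤ (2*π) * (100/99) ∧
    (99/100) * (∫ y in (-π)..π, (deriv u y)^2)
      ≤ (∫ y in (-π)..π, (deriv u y)^2 * Real.exp (-u y)) ∧
    (99/100) * π ≤ (∫ y in (-π)..π, (Real.cos y)^2 * Real.exp (-u y)) ∧
    (∫ y in (-π)..π, (Real.sin y)^2 * Real.exp (-u y)) ≤ (100/99) * π ∧
    (99/100) * π ≤ (∫ y in (-π)..π, (Real.sin y)^2 * Real.exp (-u y)) ∧
    |∫ y in (-π)..π, Real.cos y * Real.exp (-u y)| ≤ (1/99) * (2*π) ∧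
    (∫ y in (-π)..π, Vfun y * Real.exp (-u y))
      = (∫ y in (-π)..π, Real.exp (-u y)) - (∫ y in (-π)..π, Real.cos y * Real.exp (-u y)) := by
  have hle := FPaux_pi_le
  have hexpc : Continuous (fun x => Real.exp (-u x)) := Real.continuous_exp.comp hcu.neg
  have hlb : ∀ x ∈ Set.Icc (-π) π, (99/100 : ℝ) ≤ Real.exp (-u x) := by
    intro x hx
    exact FPaux_exp_lb (by rw [abs_neg]; exact hA x hx)
  have hub : ∀ x ∈ Set.Icc (-π) π, Real.exp (-u x) ≤ 100/99 := by
    intro x hx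
    exact FPaux_exp_ub (by rw [abs_neg]; exact hA x hx)
  refine ⟨?_, ?_, ?_, ?_, ?_, ?_, ?_, ?_⟩
  · have h := intervalIntegral.integral_mono_on (μ := MeasureTheory.volume)
      (f := fun _ => (99/100 : ℝ)) (g := fun y => Real.exp (-u y)) hle
      (continuous_const.intervalIntegrable _ _) (hexpc.intervalIntegrable _ _) hlb
    rwa [FPaux_int_const] at h
  · have h := intervalIntegral.integral_mono_on (μ := MeasureTheory.volume)
      (f := fun y => Real.exp (-u y)) (g := fun _ => (100/99 : ℝ)) hle
      (hexpc.intervalIntegrable _ _) (continuous_const.intervalIntegrable _ _) hub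
    rwa [FPaux_int_const] at h
  · have h := intervalIntegral.integral_mono_on (μ := MeasureTheory.volume)
      (f := fun y => (99/100) * (deriv u y)^2)
      (g := fun y => (deriv u y)^2 * Real.exp (-u y)) hle
      ((continuous_const.mul (hcu1.pow 2)).intervalIntegrable _ _)
      (((hcu1.pow 2).mul hexpc).intervalIntegrable _ _)
      (fun x hx => by
        have := hlb x hx
        nlinarith [sq_nonneg (deriv u x)])
    rwa [intervalIntegral.integral_const_mul] at h
  · have h := intervalIntegral.integral_mono_on (μ := MeasureTheory.volume)
      (f := fun y => (99/100) * (Real.cos y)^2)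
      (g := fun y => (Real.cos y)^2 * Real.exp (-u y)) hle
      ((continuous_const.mul (Real.continuous_cos.pow 2)).intervalIntegrable _ _)
      (((Real.continuous_cos.pow 2).mul hexpc).intervalIntegrable _ _)
      (fun x hx => by
        have := hlb x hx
        nlinarith [sq_nonneg (Real.cos x)])
    rwa [intervalIntegral.integral_const_mul, FPaux_int_cos_sq] at h
  · have h := intervalIntegral.integral_mono_on (μ := MeasureTheory.volume)
      (f := fun y => (Real.sin y)^2 * Real.exp (-u y))
      (g := fun y => (100/99) * (Real.sin y)^2) hle
      (((Real.continuous_sin.pow 2).mul hexpc).intervalIntegrable _ _)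
      ((continuous_const.mul (Real.continuous_sin.pow 2)).intervalIntegrable _ _)
      (fun x hx => by
        have := hub x hx
        nlinarith [sq_nonneg (Real.sin x)])
    rwa [intervalIntegral.integral_const_mul, FPaux_int_sin_sq] at h
  · have h := intervalIntegral.integral_mono_on (μ := MeasureTheory.volume)
      (f := fun y => (99/100) * (Real.sin y)^2)
      (g := fun y => (Real.sin y)^2 * Real.exp (-u y)) hle
      ((continuous_const.mul (Real.continuous_sin.pow 2)).intervalIntegrable _ _)
      (((Real.continuous_sin.pow 2).mul hexpc).intervalIntegrable _ _)
      (fun x hx => by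
        have := hlb x hx
        nlinarith [sq_nonneg (Real.sin x)])
    rwa [intervalIntegral.integral_const_mul, FPaux_int_sin_sq] at h
  · have hsplit : (∫ y in (-π)..π, Real.cos y * (Real.exp (-u y) - 1))
        = ∫ y in (-π)..π, Real.cos y * Real.exp (-u y) := by
      rw [intervalIntegral.integral_congr
        (g := fun y => Real.cos y * Real.exp (-u y) - Real.cos y) (fun x _ => by ring),
        intervalIntegral.integral_sub ((Real.continuous_cos.fun_mul hexpc).intervalIntegrable _ _)
          (Real.continuous_cos.intervalIntegrable _ _), FPaux_int_cos, sub_zero]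
    rw [← hsplit]
    have h := intervalIntegral.norm_integral_le_of_norm_le_const
      (C := 1/99) (f := fun y => Real.cos y * (Real.exp (-u y) - 1))
      (a := -π) (b := π) (fun x hx => by
        have hx' : x ∈ Set.Icc (-π) π := by
          rw [Set.uIoc_of_le hle] at hx
          exact ⟨hx.1.le, hx.2⟩
        have h1 := hlb x hx'
        have h2 := hub x hx'
        rw [Real.norm_eq_abs, abs_mul]
        have hd : |Real.exp (-u x) - 1| ≤ 1/99 := by
          rw [abs_le]; constructor <;> linarith
        calc |Real.cos x| * |Real.exp (-u x) - 1| ≤ 1 * (1/99) :=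
          mul_le_mul (abs_cos_le_one x) hd (abs_nonneg _) zero_le_one
        _ = 1/99 := by norm_num)
    rw [Real.norm_eq_abs] at h
    have habs : |π - -π| = 2*π := by
      rw [abs_of_pos (by linarith [Real.pi_pos])]; ring
    rw [habs] at h
    linarith [h]
  · rw [intervalIntegral.integral_congr
      (g := fun y => Real.exp (-u y) - Real.cos y * Real.exp (-u y))
      (fun x _ => by unfold Vfun; ring)]
    exact intervalIntegral.integral_sub (hexpc.intervalIntegrable _ _)
      ((Real.continuous_cos.mul hexpc).intervalIntegrable _ _)


lemma FPaux_dens_int (u f : ℝ → ℝ) :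
    (∫ y in (-π)..π, f y * dens u y)
      = (∫ y in (-π)..π, f y * Real.exp (-u y)) / (∫ y in (-π)..π, Real.exp (-u y)) := by
  unfold dens
  rw [intervalIntegral.integral_congr
    (g := fun y => (f y * Real.exp (-u y)) * (∫ z in (-π)..π, Real.exp (-u z))⁻¹)
    (fun x _ => by rw [div_eq_mul_inv]; ring), intervalIntegral.integral_mul_const, div_eq_mul_inv]

lemma FPaux_Ipos (u : ℝ → ℝ) (hcu : Continuous u) :
    0 < ∫ y in (-π)..π, Real.exp (-u y) := by
  apply intervalIntegral.intervalIntegral_pos_of_pos_on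
    ((Real.continuous_exp.comp hcu.neg).intervalIntegrable _ _)
    (fun x _ => Real.exp_pos _)
  linarith [Real.pi_pos]


set_option maxHeartbeats 2000000 in
lemma FPaux_partA (κ τ : ℝ) (u : ℝ → ℝ) (lam : ℝ) (hκ : 4 < κ)
    (hτ : 0 < τ) (hτs : τ ≤ 1/1000000)
    (hE : SolvesE κ (1 - τ / κ) u lam) :
    (∀ (v : ℝ → ℝ) (lam' : ℝ), SolvesL κ u v lam' →
        κ / 4 ≤ (1 / κ) * ∫ y in (-π)..π, (deriv v y) ^ 2 * dens u y) ∧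
    (∫ y in (-π)..π, Vfun y * dens u y) ≤ 1 - τ / 4 := by
  obtain ⟨hu, heven, hu0, hbp, hbm, heqE⟩ := hE
  have hκ0 : (0:ℝ) < κ := by linarith
  have hπ : (3.14:ℝ) < π := by linarith [Real.pi_gt_d6]
  have hπ' : π < 3.15 := by linarith [Real.pi_lt_d2]
  obtain ⟨hcu, hcu1, hcu2, hD1, hD2⟩ := FPaux_cd u hu
  have heq' : ∀ x ∈ Set.Icc (-π) π,
      -(deriv (deriv u) x) + (1/2) * (deriv u x)^2 + lam = τ * Vfun x := by
    intro x hx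
    have h := heqE x hx
    have hκne : κ ≠ 0 := ne_of_gt hκ0
    have h2 : κ * (1 - (1 - τ/κ)) = τ := by field_simp; ring
    linear_combination h + Vfun x * h2
  have hτabs : |τ| ≤ 1/1000000 := by rw [abs_of_pos hτ]; exact hτs
  obtain ⟨hS0, hP0, hW0, hid1, hid2, hSlb, hosc⟩ :=
    FPaux_E_ids τ u lam hu hu0 hbp hbm heq' hτabs
  set S := ∫ y in (-π)..π, (deriv u y)^2 with hS
  set P := ∫ y in (-π)..π, (deriv u y)^2 * Real.exp (-u y) with hP
  set I := ∫ y in (-π)..π, Real.exp (-u y) with hI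
  set W := ∫ y in (-π)..π, Vfun y * Real.exp (-u y) with hW
  have hI0 : 0 < I := FPaux_Ipos u hcu
  have hlam0 : 0 ≤ lam := by nlinarith [hid2, hI0, hW0, hP0, hτ]
  have hSub : S ≤ 4*π*τ := by nlinarith [hid1, Real.pi_pos]
  have hA : ∀ x ∈ Set.Icc (-π) π, |u x| ≤ 1/100 := by
    intro x hx
    have h1 := hosc x hx
    have h2 : (u x)^2 ≤ 1/10000 := by nlinarith
    nlinarith [sq_abs (u x), abs_nonneg (u x)]
  obtain ⟨hIlb, hIub, hPlb, hDlb, hTub, hTlb, hCub, hWid⟩ := FPaux_bounds u hcu hcu1 hA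
  rw [← hI] at hIlb hIub
  rw [← hS, ← hP] at hPlb
  rw [← hI, ← hW] at hWid
  have hcomb : 4*π*τ*(I - W) = S*I + 2*π*P := by
    linear_combination (-I) * hid1 + (4*π) * hid2
  constructor
  · -- part (i)
    intro v lam' hL
    obtain ⟨hv, hv0, hvp, hvm, heqL⟩ := hL
    obtain ⟨hcv, hcv1, hcv2, hE1, hE2⟩ := FPaux_cd v hv
    set C := ∫ y in (-π)..π, Real.cos y * Real.exp (-u y) with hC
    set D := ∫ y in (-π)..π, (Real.cos y)^2 * Real.exp (-u y) with hD
    set T := ∫ y in (-π)..π, (Real.sin y)^2 * Real.exp (-u y) with hT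
    set Q := ∫ y in (-π)..π, (deriv v y)^2 * Real.exp (-u y) with hQ
    set Jv := ∫ y in (-π)..π, deriv v y * Real.sin y * Real.exp (-u y) with hJv
    obtain ⟨hLid1, hLid2⟩ := FPaux_L_ids κ u v lam' hu hv hvp hvm heqL
    rw [← hI, ← hW] at hLid1
    rw [← hJv, ← hC, ← hD] at hLid2
    rw [FPaux_dens_int u (fun y => (deriv v y)^2), ← hQ, ← hI]
    have hQ0 : 0 ≤ Q := intervalIntegral.integral_nonneg FPaux_pi_le
      (fun x _ => mul_nonneg (sq_nonneg _) (Real.exp_pos _).le)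
    have hcs : Jv^2 ≤ Q * T := by
      have h := FPaux_cs (deriv v) Real.sin (fun y => Real.exp (-u y)) hcv1
        Real.continuous_sin (Real.continuous_exp.comp hcu.neg) (fun x => (Real.exp_pos _).le)
      rwa [← hJv, ← hQ, ← hT] at h
    have hJvI : Jv * I = κ * (C^2 - D*I) := by
      linear_combination I * hLid2 + C * hLid1 - κ * C * hWid
    clear_value S P I W C D T Q Jv
    clear hS hP hI hW hC hD hT hQ hJv heqE heqL heq' hosc hid1 hid2 hWid hLid1 hLid2
    clear hD1 hD2 hE1 hE2 hcu hcu1 hcu2 hcv hcv1 hcv2 hu hv hu0 hv0 hbp hbm hvp hvm heven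
    -- numeric bounds
    have hDI : (9801/5000)*π^2 ≤ D*I := by
      have h := mul_le_mul hDlb hIlb (by positivity) (le_trans (by positivity) hDlb)
      nlinarith [h]
    have hC2 : C^2 ≤ (4/9801)*π^2 := by
      have h := pow_le_pow_left₀ (abs_nonneg C) hCub 2
      rw [sq_abs] at h
      nlinarith [h]
    have hI3 : I^3 ≤ ((200/99)*π)^3 := by
      have hIub' : I ≤ (200/99)*π := by nlinarith [hIub]
      exact pow_le_pow_left₀ hI0.le hIub' 3
    have hTI3 : T * I^3 ≤ ((100/99)*π) * ((200/99)*π)^3 := by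
      have hT0 : 0 ≤ T := by nlinarith [hTlb, Real.pi_pos]
      have h1 : T * I^3 ≤ T * ((200/99)*π)^3 := by
        apply mul_le_mul_of_nonneg_left hI3 hT0
      have h2 : T * ((200/99)*π)^3 ≤ ((100/99)*π) * ((200/99)*π)^3 := by
        apply mul_le_mul_of_nonneg_right (by nlinarith [hTub]) (by positivity)
      linarith
    have hkey : T * I^3 ≤ 4 * (D*I - C^2)^2 := by
      have h1 : (1948/1000)*π^2 ≤ D*I - C^2 := by nlinarith [hDI, hC2, sq_nonneg π]
      have h2 : ((1948/1000)*π^2)^2 ≤ (D*I - C^2)^2 := by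
        apply pow_le_pow_left₀ (by positivity) h1
      nlinarith [h2, hTI3, sq_nonneg π, Real.pi_pos, sq_nonneg (π*π)]
    -- conclude Q ≥ κ²I/4
    have hTpos : 0 < T := by nlinarith [hTlb, Real.pi_pos]
    have hQbig : κ^2 * I / 4 ≤ Q := by
      have h1 : κ^2 * (D*I - C^2)^2 ≤ Q * T * I^2 := by
        have h2 : (Jv * I)^2 = κ^2 * (D*I - C^2)^2 := by
          rw [hJvI]; ring
        nlinarith [hcs, sq_nonneg I, sq_nonneg Jv, mul_pos hI0 hI0]
      have h3 : κ^2 * (T * I^3) ≤ 4 * (Q * T * I^2) := by nlinarith [hkey, h1, sq_nonneg κ]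
      nlinarith [h3, mul_pos hTpos (mul_pos hI0 hI0), hQ0, hTpos, hI0]
    have hrw : (1/κ) * (Q / I) = Q / (κ * I) := by
      field_simp
    rw [hrw, le_div_iff₀ (by positivity)]
    nlinarith [hQbig, hI0]
  · -- part (ii)
    rw [FPaux_dens_int u Vfun, ← hW, ← hI]
    clear_value S P I W
    have h5 : 2*π*P ≥ 2*π*((99/100)*S) := by nlinarith [hPlb, Real.pi_pos]
    have h6 : ((99/100)*π*τ^2)*(I + (99/50)*π) ≤ S*(I + (99/50)*π) := by
      apply mul_le_mul_of_nonneg_right hSlb (by nlinarith [hI0, Real.pi_pos])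
    have h7 : π*τ^2*I ≤ ((99/100)*π*τ^2)*(I + (99/50)*π) := by
      nlinarith [hIub, mul_nonneg Real.pi_pos.le (sq_nonneg τ), Real.pi_pos, sq_nonneg τ]
    have h8 : τ*(I - W) ≥ τ^2/4*I := by
      nlinarith [hcomb, h5, h6, h7, Real.pi_pos]
    rw [div_le_iff₀ hI0]
    nlinarith [h8, hτ, hI0]


set_option maxHeartbeats 2000000 in
lemma FPaux_partB (κ a : ℝ) (u : ℝ → ℝ) (lam : ℝ) (hκ : 4 < κ)
    (ha : 1 < a) (has : κ * (a - 1) ≤ 1/1000000)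
    (hE : SolvesE κ a u lam)
    (hfix : (∫ y in (-π)..π, Vfun y * dens u y) = a) : False := by
  obtain ⟨hu, heven, hu0, hbp, hbm, heqE⟩ := hE
  have hκ0 : (0:ℝ) < κ := by linarith
  have hπ : (3.14:ℝ) < π := by linarith [Real.pi_gt_d6]
  have hπ' : π < 3.15 := by linarith [Real.pi_lt_d2]
  obtain ⟨hcu, hcu1, hcu2, hD1, hD2⟩ := FPaux_cd u hu
  set τ := κ * (1 - a) with hτdef
  have hτneg : τ < 0 := by nlinarith
  have hτabs : |τ| ≤ 1/1000000 := by
    rw [abs_of_neg hτneg]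
    nlinarith
  have heq' : ∀ x ∈ Set.Icc (-π) π,
      -(deriv (deriv u) x) + (1/2) * (deriv u x)^2 + lam = τ * Vfun x := by
    intro x hx
    have h := heqE x hx
    linear_combination h
  obtain ⟨hS0, hP0, hW0, hid1, hid2, hSlb, hosc⟩ :=
    FPaux_E_ids τ u lam hu hu0 hbp hbm heq' hτabs
  set S := ∫ y in (-π)..π, (deriv u y)^2 with hS
  set P := ∫ y in (-π)..π, (deriv u y)^2 * Real.exp (-u y) with hP
  set I := ∫ y in (-π)..π, Real.exp (-u y) with hI
  set W := ∫ y in (-π)..π, Vfun y * Real.exp (-u y) with hW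
  have hI0 : 0 < I := FPaux_Ipos u hcu
  rw [FPaux_dens_int u Vfun, ← hW, ← hI] at hfix
  have hWa : W = a * I := by
    rw [div_eq_iff hI0.ne'] at hfix
    linarith [hfix]
  have hcomb : 4*π*τ*(I - W) = S*I + 2*π*P := by
    linear_combination (-I) * hid1 + (4*π) * hid2
  -- I - W = (τ/κ) I , so LHS = 4π τ²/κ I
  have hIW : κ * (I - W) = τ * I := by
    rw [hWa, hτdef]; ring
  have hcomb2 : 4*π*τ^2*I = κ*(S*I + 2*π*P) := by
    linear_combination κ * hcomb - (4*π*τ) * hIW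
  have hSub : S ≤ π * τ^2 := by
    have hPterm : 0 ≤ κ*(2*π*P) := by positivity
    have h1 : κ*(S*I) ≤ 4*π*τ^2*I := by nlinarith [hcomb2, hPterm]
    have h2 : κ*S ≤ 4*π*τ^2 := by nlinarith [h1, hI0]
    nlinarith [h2, hκ, hS0]
  have hA : ∀ x ∈ Set.Icc (-π) π, |u x| ≤ 1/100 := by
    intro x hx
    have h1 := hosc x hx
    have hττ : τ^2 ≤ (1/1000000)^2 := by
      nlinarith [sq_abs τ, abs_nonneg τ]
    have hS3 : S ≤ (3.15)*(1/1000000)^2 := by nlinarith [hSub, hττ, Real.pi_pos, hπ', sq_nonneg τ]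
    have h2 : (u x)^2 ≤ 1/10000 := by nlinarith [h1, hS3, hπ', Real.pi_pos, hS0]
    nlinarith [sq_abs (u x), abs_nonneg (u x)]
  obtain ⟨hIlb, hIub, hPlb, hDlb, hTub, hTlb, hCub, hWid⟩ := FPaux_bounds u hcu hcu1 hA
  rw [← hI] at hIlb hIub
  rw [← hS, ← hP] at hPlb
  clear_value S P I W
  clear hS hP hI hW heqE heq' hosc hid1 hid2 hWid hD1 hD2 hcu hcu1 hcu2 hu hu0 hbp hbm heven
  -- final contradiction
  have hτ2 : 0 < τ^2 := by nlinarith [hτneg]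
  have h5 : 2*π*P ≥ 2*π*((99/100)*S) := by nlinarith [hPlb, Real.pi_pos]
  have h6 : ((99/100)*π*τ^2)*(I + (99/50)*π) ≤ S*(I + (99/50)*π) := by
    apply mul_le_mul_of_nonneg_right hSlb (by nlinarith [hI0, Real.pi_pos])
  have h7 : π*τ^2*I < ((99/100)*π*τ^2)*(I + (99/50)*π) := by
    nlinarith [hIub, mul_pos Real.pi_pos hτ2, Real.pi_pos, hτ2]
  have h8 : κ*(S*I + 2*π*P) ≥ κ*(((99/100)*π*τ^2)*(I + (99/50)*π)) := by
    apply mul_le_mul_of_nonneg_left (by linarith [h5, h6]) hκ0.le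
  have c1 : κ*(π*τ^2*I) < κ*(((99/100)*π*τ^2)*(I + (99/50)*π)) :=
    (mul_lt_mul_iff_right₀ hκ0).mpr h7
  have c2 : 4*(π*τ^2*I) < κ*(π*τ^2*I) := by
    have hx := mul_pos (mul_pos Real.pi_pos hτ2) hI0
    nlinarith [hx]
  linarith [hcomb2, h8, c1, c2]


/-- Near `a = 1` the derivative of the fixed-point map is at least `κ/4`,
`F_κ(1 - τ/κ) ≤ 1 - τ/4 < 1 - τ/κ`, and consequently `a = 1` is the only fixed
point in `[1 - τ₀/κ, 1 + τ₀/κ]`. -/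
theorem fixed_point_isolated_near_one :
    ∃ τ₀ ∈ Set.Ioo (0 : ℝ) 1, ∀ κ : ℝ, 4 < κ →
      (∀ τ ∈ Set.Ioc (0 : ℝ) τ₀,
        ∀ (u : ℝ → ℝ) (lam : ℝ), SolvesE κ (1 - τ / κ) u lam →
          (∀ (v : ℝ → ℝ) (lam' : ℝ), SolvesL κ u v lam' →
            κ / 4 ≤ (1 / κ) * ∫ y in (-π)..π, (deriv v y) ^ 2 * dens u y) ∧
          (∫ y in (-π)..π, Vfun y * dens u y) ≤ 1 - τ / 4 ∧
          1 - τ / 4 < 1 - τ / κ) ∧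
      (∀ a ∈ Set.Icc (1 - τ₀ / κ) (1 + τ₀ / κ),
        (∃ (u : ℝ → ℝ) (lam : ℝ), SolvesE κ a u lam ∧
          (∫ y in (-π)..π, Vfun y * dens u y) = a) → a = 1) := by
  refine ⟨1/1000000, ⟨by norm_num, by norm_num⟩, fun κ hκ => ⟨?_, ?_⟩⟩
  · intro τ hτ u lam hE
    have hp := FPaux_partA κ τ u lam hκ hτ.1 hτ.2 hE
    have h5 : τ/κ < τ/4 := div_lt_div_of_pos_left hτ.1 (by norm_num) hκ
    exact ⟨hp.1, hp.2, by linarith⟩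
  · rintro a ha ⟨u, lam, hE, hfix⟩
    have hκ0 : (0:ℝ) < κ := by linarith
    rcases lt_trichotomy a 1 with h1 | h1 | h1
    · exfalso
      have hτpos : 0 < κ * (1 - a) := by nlinarith
      have hτs : κ * (1 - a) ≤ 1/1000000 := by
        have h2 := ha.1
        have h3 : 1 - a ≤ (1/1000000)/κ := by linarith
        calc κ*(1-a) ≤ κ*((1/1000000)/κ) := mul_le_mul_of_nonneg_left h3 hκ0.le
        _ = 1/1000000 := by field_simp
      have hae : 1 - (κ * (1 - a))/κ = a := by field_simp; ring
      have hE' : SolvesE κ (1 - (κ * (1 - a))/κ) u lam := by rw [hae]; exact hE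
      have hp := FPaux_partA κ (κ * (1 - a)) u lam hκ hτpos hτs hE'
      have h4 := hp.2
      have h5 : (κ * (1 - a))/κ < (κ * (1 - a))/4 :=
        div_lt_div_of_pos_left hτpos (by norm_num) hκ
      rw [hfix] at h4
      linarith [h4, h5, hae.le, hae.ge]
    · exact h1
    · exfalso
      have has : κ * (a - 1) ≤ 1/1000000 := by
        have h2 := ha.2
        have h3 : a - 1 ≤ (1/1000000)/κ := by linarith
        calc κ*(a-1) ≤ κ*((1/1000000)/κ) := mul_le_mul_of_nonneg_left h3 hκ0.le
        _ = 1/1000000 := by field_simp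
      exact FPaux_partB κ a u lam hκ h1 has hE hfix
end

section
/- There exists C > 0 such that for every κ > 0, every τ ∈ (0, 1), and every solution (u, λ) of the ergodic equation E(κ, a) with a = 1 − τ/κ and density m: (i) 0 ≤ λ ≤ C τ; (ii) |m(x) − 1/(2π)| ≤ 2 √(C τ) for all x ∈ [−π, π]; and (iii) there exists τ₁ ∈ (0, 1) such that if moreover τ ≤ τ₁ then |u'(x)| ≤ C τ for all x ∈ [−π, π]. -/
open Real

/-!
Substituting `a = 1 - τ/κ` turns the equation into `-u'' + u'²/2 + λ = τ V`. Integrating it over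
`[-π, π]` with the Neumann conditions gives `∫ u'²/2 + 2πλ = τ ∫ V = 2πτ`. The Hopf–Cole transform
`w = e^{-u/2}` linearises the equation to `w'' = (τ V - λ) w / 2`; as `∫ w'' = 0` and `w > 0`, this
forces `λ ≥ 0`, hence `λ ≤ τ` and `∫ u'² ≤ 4πτ`. With `u 0 = 0` the `L²` bound on `u'` gives
`|u| ≤ 3π√τ`, which controls `e^{-u}` and therefore the density. Once `|u| ≤ 1`, `w` is pinched
between `1/2` and `2` and `|w''| ≤ 2τ`, so `|w'| ≤ 4πτ` and `|u'| = 2|w'|/w ≤ 16πτ`.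
-/

open Set intervalIntegral

lemma Vfun_nonneg (x : ℝ) : 0 ≤ Vfun x := sub_nonneg.2 (cos_le_one x)

lemma Vfun_le_two (x : ℝ) : Vfun x ≤ 2 := by
  unfold Vfun; linarith [neg_one_le_cos x]

lemma integral_Vfun : ∫ x in (-π)..π, Vfun x = 2 * π := by
  simp only [Vfun]
  rw [integral_sub intervalIntegrable_const (continuous_cos.intervalIntegrable _ _)]
  simp only [integral_const, smul_eq_mul, integral_cos, sin_pi, sin_neg]
  ring

lemma exp_sub_one_le_mul_exp (s : ℝ) : exp s - 1 ≤ s * exp s := by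
  have h := mul_le_mul_of_nonneg_right (one_sub_le_exp_neg s) (exp_pos s).le
  rw [← exp_add, neg_add_cancel, exp_zero] at h
  linarith

lemma abs_le_sq_div_add {ε : ℝ} (hε : 0 < ε) (t : ℝ) : |t| ≤ t ^ 2 / (2 * ε) + ε / 2 := by
  rw [div_add_div _ _ (by positivity) two_ne_zero, le_div_iff₀ (by positivity)]
  nlinarith [sq_nonneg (|t| - ε), sq_abs t]

lemma integral_abs_le_integral_sq_div_add {g : ℝ → ℝ} {a b ε : ℝ} (hg : Continuous g)
    (hab : a ≤ b) (hε : 0 < ε) :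
    ∫ t in a..b, |g t| ≤ (∫ t in a..b, g t ^ 2) / (2 * ε) + (b - a) * ε / 2 := by
  have hg2 : Continuous fun t => g t ^ 2 / (2 * ε) := by fun_prop
  calc ∫ t in a..b, |g t| ≤ ∫ t in a..b, (g t ^ 2 / (2 * ε) + ε / 2) :=
        integral_mono_on hab (hg.abs.intervalIntegrable _ _)
          ((hg2.add continuous_const).intervalIntegrable _ _) fun t _ => abs_le_sq_div_add hε _
    _ = _ := by
        rw [integral_add (hg2.intervalIntegrable _ _) intervalIntegrable_const, integral_div,
          integral_const, smul_eq_mul]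
        ring

lemma abs_sub_le_integral_abs_deriv {u : ℝ → ℝ} {a b x y : ℝ} (hu : ContDiff ℝ 1 u)
    (hx : x ∈ Icc a b) (hy : y ∈ Icc a b) : |u x - u y| ≤ ∫ t in a..b, |deriv u t| := by
  have hu' := hu.continuous_deriv_one
  have hsub : uIcc y x ⊆ uIcc a b := by
    rw [uIcc_of_le (hx.1.trans hx.2)]; exact uIcc_subset_Icc hy hx
  rw [← integral_deriv_eq_sub (fun t _ => (hu.differentiable one_ne_zero).differentiableAt)
    (hu'.intervalIntegrable _ _)]
  calc |∫ t in y..x, deriv u t| ≤ |∫ t in y..x, (|deriv u t|)| :=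
        by simpa only [Real.norm_eq_abs] using
          norm_integral_le_abs_integral_norm (f := deriv u) (a := y) (b := x)
    _ ≤ |∫ t in a..b, (|deriv u t|)| :=
        abs_integral_mono_interval (uIoc_subset_uIoc_of_uIcc_subset_uIcc hsub)
          (Filter.Eventually.of_forall fun _ => abs_nonneg _) (hu'.abs.intervalIntegrable _ _)
    _ = ∫ t in a..b, |deriv u t| :=
        abs_of_nonneg (integral_nonneg (hx.1.trans hx.2) fun _ _ => abs_nonneg _)

lemma abs_le_of_integral_sq_deriv_le {u : ℝ → ℝ} {τ : ℝ} (hu : ContDiff ℝ 1 u) (hu0 : u 0 = 0)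
    (hτ : 0 < τ) (hJ : ∫ x in (-π)..π, deriv u x ^ 2 ≤ 4 * π * τ) :
    ∀ x ∈ Icc (-π) π, |u x| ≤ 3 * π * √τ := by
  intro x hx
  have hε : 0 < √τ := sqrt_pos.2 hτ
  have hmem0 : (0 : ℝ) ∈ Icc (-π) π := ⟨by linarith [pi_pos], pi_pos.le⟩
  have hJ' : (∫ x in (-π)..π, deriv u x ^ 2) / (2 * √τ) ≤ 2 * π * √τ := by
    rw [div_le_iff₀ (by positivity), show 2 * π * √τ * (2 * √τ) = 4 * π * √τ ^ 2 by ring,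
      sq_sqrt hτ.le]
    exact hJ
  calc |u x| = |u x - u 0| := by rw [hu0, sub_zero]
    _ ≤ ∫ t in (-π)..π, |deriv u t| := abs_sub_le_integral_abs_deriv hu hx hmem0
    _ ≤ (∫ t in (-π)..π, deriv u t ^ 2) / (2 * √τ) + (π - -π) * √τ / 2 :=
        integral_abs_le_integral_sq_div_add hu.continuous_deriv_one (by linarith [pi_pos]) hε
    _ ≤ 3 * π * √τ := by linarith [show (π - -π) * √τ / 2 = π * √τ by ring]

lemma exp_neg_mem_Icc_of_abs_le {u : ℝ → ℝ} {M : ℝ} (hM : ∀ x ∈ Icc (-π) π, |u x| ≤ M) :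
    ∀ y ∈ Icc (-π) π, exp (-M) ≤ exp (-u y) ∧ exp (-u y) ≤ exp M := fun y hy =>
  have := abs_le.1 (hM y hy)
  ⟨exp_le_exp.2 (by linarith), exp_le_exp.2 (by linarith)⟩

lemma integral_exp_neg_mem_Icc_of_abs_le {u : ℝ → ℝ} {M : ℝ} (hu : Continuous u)
    (hM : ∀ x ∈ Icc (-π) π, |u x| ≤ M) :
    2 * π * exp (-M) ≤ ∫ y in (-π)..π, exp (-u y) ∧
      ∫ y in (-π)..π, exp (-u y) ≤ 2 * π * exp M := by
  have hπ := pi_pos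
  have hexp_le := exp_neg_mem_Icc_of_abs_le hM
  have hint : IntervalIntegrable (fun y => exp (-u y)) MeasureTheory.volume (-π) π :=
    hu.neg.rexp.intervalIntegrable _ _
  have hlow : 2 * π * exp (-M) ≤ ∫ y in (-π)..π, exp (-u y) := by
    have := integral_mono_on (by linarith) intervalIntegrable_const hint
      fun y hy => (hexp_le y hy).1
    rw [integral_const, smul_eq_mul] at this
    linarith [show (π - -π) * exp (-M) = 2 * π * exp (-M) by ring]
  have hhigh : ∫ y in (-π)..π, exp (-u y) ≤ 2 * π * exp M := by
    have := integral_mono_on (by linarith) hint intervalIntegrable_const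
      fun y hy => (hexp_le y hy).2
    rw [integral_const, smul_eq_mul] at this
    linarith [show (π - -π) * exp M = 2 * π * exp M by ring]
  exact ⟨hlow, hhigh⟩

lemma abs_dens_sub_le {u : ℝ → ℝ} {M : ℝ} (hu : Continuous u)
    (hM : ∀ x ∈ Icc (-π) π, |u x| ≤ M) {x : ℝ} (hx : x ∈ Icc (-π) π) :
    |dens u x - 1 / (2 * π)| ≤ (exp (2 * M) - 1) / (2 * π) := by
  have hπ := pi_pos
  have hexp_le := exp_neg_mem_Icc_of_abs_le hM
  obtain ⟨hlow, hhigh⟩ := integral_exp_neg_mem_Icc_of_abs_le hu hM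
  have hupper : dens u x ≤ exp (2 * M) / (2 * π) := by
    calc dens u x ≤ exp M / (2 * π * exp (-M)) :=
          div_le_div₀ (exp_pos M).le (hexp_le x hx).2 (by positivity) hlow
      _ = exp (2 * M) / (2 * π) := by
          rw [exp_neg, two_mul M, exp_add]; field_simp
  have hlower : exp (-(2 * M)) / (2 * π) ≤ dens u x := by
    calc exp (-(2 * M)) / (2 * π) = exp (-M) / (2 * π * exp M) := by
          rw [exp_neg, exp_neg, two_mul M, exp_add]; field_simp
      _ ≤ dens u x := div_le_div₀ (exp_pos _).le (hexp_le x hx).1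
          ((by positivity : 0 < 2 * π * exp (-M)).trans_le hlow) hhigh
  have hsym : 1 - exp (-(2 * M)) ≤ exp (2 * M) - 1 := by
    linarith [add_one_le_exp (2 * M), one_sub_le_exp_neg (2 * M)]
  rw [abs_le]
  constructor
  · calc -((exp (2 * M) - 1) / (2 * π)) ≤ -((1 - exp (-(2 * M))) / (2 * π)) :=
          neg_le_neg (div_le_div_of_nonneg_right hsym (by positivity))
      _ = exp (-(2 * M)) / (2 * π) - 1 / (2 * π) := by ring
      _ ≤ dens u x - 1 / (2 * π) := by linarith
  · calc dens u x - 1 / (2 * π) ≤ exp (2 * M) / (2 * π) - 1 / (2 * π) := by linarith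
      _ = (exp (2 * M) - 1) / (2 * π) := by ring

section ErgodicEquation

variable {u f : ℝ → ℝ} {a b lam : ℝ}

lemma integral_ergodic_eq (hu : ContDiff ℝ 2 u) (hab : a ≤ b) (hua : deriv u a = 0)
    (hub : deriv u b = 0)
    (heq : ∀ x ∈ Icc a b, -deriv (deriv u) x + 1 / 2 * deriv u x ^ 2 + lam = f x) :
    1 / 2 * (∫ x in a..b, deriv u x ^ 2) + (b - a) * lam = ∫ x in a..b, f x := by
  have hu'' : Continuous (deriv (deriv u)) := (hu.deriv' (n := 1)).continuous_deriv_one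
  have hu' : Continuous fun x => 1 / 2 * deriv u x ^ 2 := by
    have := hu.continuous_deriv one_le_two; fun_prop
  have hlhs : Continuous fun x => -deriv (deriv u) x + 1 / 2 * deriv u x ^ 2 := hu''.neg.add hu'
  have hneg : Continuous fun x => -deriv (deriv u) x := hu''.neg
  have hint'' : ∫ x in a..b, deriv (deriv u) x = 0 := by
    rw [integral_deriv_eq_sub (fun x _ => hu.differentiable_deriv_two x)
      (hu''.intervalIntegrable _ _), hua, hub, sub_self]
  rw [← integral_congr fun x hx => heq x (by rwa [uIcc_of_le hab] at hx),
    integral_add (hlhs.intervalIntegrable _ _) intervalIntegrable_const,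
    integral_add (hneg.intervalIntegrable _ _) (hu'.intervalIntegrable _ _), integral_neg,
    hint'', integral_const_mul, integral_const, smul_eq_mul]
  ring

noncomputable def hopfCole (u : ℝ → ℝ) (x : ℝ) : ℝ := exp (-u x / 2)

lemma hopfCole_pos (x : ℝ) : 0 < hopfCole u x := exp_pos _

lemma contDiff_hopfCole {n : WithTop ℕ∞} (hu : ContDiff ℝ n u) : ContDiff ℝ n (hopfCole u) :=
  (hu.neg.div_const 2).exp

lemma hasDerivAt_hopfCole (hu : Differentiable ℝ u) (x : ℝ) :
    HasDerivAt (hopfCole u) (-deriv u x / 2 * hopfCole u x) x :=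
  (((hu x).hasDerivAt.neg).div_const 2).exp.congr_deriv (mul_comm _ _)

lemma deriv_hopfCole (hu : Differentiable ℝ u) :
    deriv (hopfCole u) = fun x => -deriv u x / 2 * hopfCole u x :=
  funext fun x => (hasDerivAt_hopfCole hu x).deriv

lemma deriv_deriv_hopfCole (hu : ContDiff ℝ 2 u) (x : ℝ) :
    deriv (deriv (hopfCole u)) x =
      (-deriv (deriv u) x / 2 + deriv u x ^ 2 / 4) * hopfCole u x := by
  have hud : Differentiable ℝ u := hu.differentiable two_ne_zero
  rw [deriv_hopfCole hud]
  refine ((((hu.differentiable_deriv_two x).hasDerivAt.neg).div_const 2).mul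
    (hasDerivAt_hopfCole hud x)).deriv.trans ?_
  rw [Pi.neg_apply]
  ring

lemma deriv_deriv_hopfCole_of_eq (hu : ContDiff ℝ 2 u)
    (heq : ∀ x ∈ Icc a b, -deriv (deriv u) x + 1 / 2 * deriv u x ^ 2 + lam = f x) :
    ∀ x ∈ Icc a b, deriv (deriv (hopfCole u)) x = (f x - lam) / 2 * hopfCole u x := by
  intro x hx
  rw [deriv_deriv_hopfCole hu, ← heq x hx]
  ring

lemma hopfCole_mem_Icc_of_abs_le_one {x : ℝ} (hx : |u x| ≤ 1) :
    1 / 2 ≤ hopfCole u x ∧ hopfCole u x ≤ 2 := by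
  have hexp_half : exp (1 / 2) < 2 := by
    have := exp_bound_div_one_sub_of_interval' (x := 1 / 2) (by norm_num) (by norm_num)
    norm_num at this ⊢; linarith
  have := abs_le.1 hx
  constructor
  · calc (1 : ℝ) / 2 ≤ exp (-(1 / 2)) := by
          rw [exp_neg, ← one_div]; exact one_div_le_one_div_of_le (exp_pos _) hexp_half.le
      _ ≤ hopfCole u x := exp_le_exp.2 (by linarith)
  · exact (exp_le_exp.2 (by linarith)).trans hexp_half.le

lemma ergodic_const_nonneg (hu : ContDiff ℝ 2 u) (hab : a < b) (hua : deriv u a = 0)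
    (hub : deriv u b = 0) (hf : ∀ x ∈ Icc a b, 0 ≤ f x)
    (heq : ∀ x ∈ Icc a b, -deriv (deriv u) x + 1 / 2 * deriv u x ^ 2 + lam = f x) :
    0 ≤ lam := by
  have hw := contDiff_hopfCole hu
  have hw'' : Continuous (deriv (deriv (hopfCole u))) := (hw.deriv' (n := 1)).continuous_deriv_one
  have hint : ∫ x in a..b, deriv (deriv (hopfCole u)) x = 0 := by
    rw [integral_deriv_eq_sub (fun x _ => hw.differentiable_deriv_two x)
      (hw''.intervalIntegrable _ _), deriv_hopfCole (hu.differentiable two_ne_zero)]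
    simp only [hua, hub, neg_zero, zero_div, zero_mul, sub_self]
  by_contra! hlam
  refine hint.not_gt (intervalIntegral_pos_of_pos_on (hw''.intervalIntegrable _ _) (fun x hx => ?_)
    hab)
  rw [deriv_deriv_hopfCole_of_eq hu heq x (Ioo_subset_Icc_self hx)]
  exact mul_pos (by linarith [hf x (Ioo_subset_Icc_self hx)]) (hopfCole_pos x)

lemma abs_deriv_le_of_abs_le_one {K : ℝ} (hu : ContDiff ℝ 2 u) (hua : deriv u a = 0)
    (heq : ∀ x ∈ Icc a b, -deriv (deriv u) x + 1 / 2 * deriv u x ^ 2 + lam = f x)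
    (hK : ∀ x ∈ Icc a b, |f x - lam| ≤ K) (hu1 : ∀ x ∈ Icc a b, |u x| ≤ 1) :
    ∀ x ∈ Icc a b, |deriv u x| ≤ 4 * K * (b - a) := by
  intro x hx
  have hw_bounds y (hy : y ∈ Icc a b) := hopfCole_mem_Icc_of_abs_le_one (hu1 y hy)
  have hw'' : ∀ y ∈ Ico a b, ‖deriv (deriv (hopfCole u)) y‖ ≤ K := by
    intro y hy
    have hy' := Ico_subset_Icc_self hy
    rw [deriv_deriv_hopfCole_of_eq hu heq y hy']
    simp only [norm_mul, norm_div, Real.norm_eq_abs, abs_of_pos (hopfCole_pos y), abs_two]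
    nlinarith [hK y hy', (hw_bounds y hy').2, abs_nonneg (f y - lam)]
  have hw' : |deriv (hopfCole u) x| ≤ K * (b - a) := by
    have hw := contDiff_hopfCole hu
    have := norm_image_sub_le_of_norm_deriv_le_segment'
      (fun y _ => (hw.differentiable_deriv_two y).hasDerivAt.hasDerivWithinAt) hw'' x hx
    rw [deriv_hopfCole (hu.differentiable two_ne_zero)] at this ⊢
    simp only [hua, neg_zero, zero_div, zero_mul, sub_zero, Real.norm_eq_abs] at this
    have hK0 : 0 ≤ K := (abs_nonneg _).trans (hK x hx)
    nlinarith [hx.2]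
  rw [deriv_hopfCole (hu.differentiable two_ne_zero), abs_mul, abs_div, abs_neg,
    abs_of_pos (hopfCole_pos x), abs_two] at hw'
  nlinarith [(hw_bounds x hx).1, abs_nonneg (deriv u x)]

end ErgodicEquation

lemma ergodic_const_bounds {u : ℝ → ℝ} {τ lam : ℝ} (hu : ContDiff ℝ 2 u) (hτ : 0 ≤ τ)
    (hupi : deriv u π = 0) (hunpi : deriv u (-π) = 0)
    (heq : ∀ x ∈ Icc (-π) π, -deriv (deriv u) x + 1 / 2 * deriv u x ^ 2 + lam = τ * Vfun x) :
    0 ≤ lam ∧ lam ≤ τ ∧ ∫ x in (-π)..π, deriv u x ^ 2 ≤ 4 * π * τ := by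
  have hπ := pi_pos
  have hlam := ergodic_const_nonneg hu (by linarith) hunpi hupi
    (fun x _ => mul_nonneg hτ (Vfun_nonneg x)) heq
  have hid := integral_ergodic_eq hu (by linarith) hunpi hupi heq
  rw [integral_const_mul, integral_Vfun] at hid
  have hJ : 0 ≤ ∫ x in (-π)..π, deriv u x ^ 2 :=
    integral_nonneg (by linarith) fun _ _ => sq_nonneg _
  refine ⟨hlam, ?_, ?_⟩ <;> nlinarith

lemma sixteen_mul_pi_le_four_mul_exp : 16 * π ≤ 4 * exp (12 * π) := by
  linarith [add_one_le_exp (12 * π), pi_pos]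

lemma three_mul_pi_mul_sqrt_le_one {τ : ℝ} (hτ : τ ≤ 1 / 100) : 3 * π * √τ ≤ 1 := by
  have hs : √τ ≤ 1 / 10 := (sqrt_le_left (by norm_num)).2 (by linarith)
  nlinarith [pi_lt_d2, pi_pos, sqrt_nonneg τ]

lemma exp_sub_one_div_le_two_mul_sqrt {τ : ℝ} (hτ1 : τ ≤ 1) :
    (exp (2 * (3 * π * √τ)) - 1) / (2 * π) ≤ 2 * √(4 * exp (12 * π) * τ) := by
  have hπ := pi_pos
  have hsqrt : √(4 * exp (12 * π) * τ) = 2 * exp (6 * π) * √τ := by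
    rw [show 4 * exp (12 * π) = (2 * exp (6 * π)) ^ 2 by rw [mul_pow, ← exp_nat_mul]; ring_nf,
      sqrt_mul (sq_nonneg _), sqrt_sq (by positivity)]
  have hs : √τ ≤ 1 := sqrt_le_one.2 hτ1
  have hpos : 0 ≤ π * √τ * exp (6 * π) := by positivity
  rw [hsqrt, div_le_iff₀ (by positivity)]
  calc exp (2 * (3 * π * √τ)) - 1 ≤ 2 * (3 * π * √τ) * exp (2 * (3 * π * √τ)) :=
        exp_sub_one_le_mul_exp _
    _ ≤ 2 * (3 * π * √τ) * exp (6 * π) :=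
        mul_le_mul_of_nonneg_left (exp_le_exp.2 (by nlinarith)) (by positivity)
    _ ≤ 2 * (2 * exp (6 * π) * √τ) * (2 * π) := by linarith

/-- Estimates for the ergodic problem with `a = 1 - τ/κ`: bounds on the ergodic
constant, closeness of the density to the uniform one, and (for small `τ`)
smallness of `u'`. -/
theorem estimates_near_incoherent :
    ∃ C : ℝ, 0 < C ∧ ∃ τ₁ ∈ Set.Ioo (0 : ℝ) 1,
      ∀ κ : ℝ, 0 < κ → ∀ τ ∈ Set.Ioo (0 : ℝ) 1,
        ∀ (u : ℝ → ℝ) (lam : ℝ), SolvesE κ (1 - τ / κ) u lam →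
          (0 ≤ lam ∧ lam ≤ C * τ) ∧
          (∀ x ∈ Set.Icc (-π) π, |dens u x - 1 / (2 * π)| ≤ 2 * Real.sqrt (C * τ)) ∧
          (τ ≤ τ₁ → ∀ x ∈ Set.Icc (-π) π, |deriv u x| ≤ C * τ) := by
  -- `C` has to dominate `16π` (gradient bound) and `(3 e^{6π} / 2)²` (density bound).
  refine ⟨4 * exp (12 * π), by positivity, 1 / 100, ⟨by norm_num, by norm_num⟩, ?_⟩
  rintro κ hκ τ ⟨hτ0, hτ1⟩ u lam ⟨hu, -, hu0, hupi, hunpi, hE⟩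
  have heq : ∀ x ∈ Icc (-π) π,
      -deriv (deriv u) x + 1 / 2 * deriv u x ^ 2 + lam = τ * Vfun x := by
    intro x hx
    rw [hE x hx]
    field_simp
    ring
  obtain ⟨hlam0, hlamτ, hJ⟩ := ergodic_const_bounds hu hτ0.le hupi hunpi heq
  have hC := sixteen_mul_pi_le_four_mul_exp
  have hu_small := abs_le_of_integral_sq_deriv_le (hu.of_le one_le_two) hu0 hτ0 hJ
  refine ⟨⟨hlam0, hlamτ.trans (le_mul_of_one_le_left hτ0.le (by linarith [pi_gt_three]))⟩,
    fun x hx => ?_, fun hτ₁ x hx => ?_⟩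
  · exact (abs_dens_sub_le hu.continuous hu_small hx).trans
      (exp_sub_one_div_le_two_mul_sqrt hτ1.le)
  · have hK : ∀ y ∈ Icc (-π) π, |τ * Vfun y - lam| ≤ 2 * τ := fun y _ =>
      abs_le.2 ⟨by nlinarith [Vfun_nonneg y], by nlinarith [Vfun_le_two y]⟩
    have hu1 : ∀ y ∈ Icc (-π) π, |u y| ≤ 1 := fun y hy =>
      (hu_small y hy).trans (three_mul_pi_mul_sqrt_le_one hτ₁)
    calc |deriv u x| ≤ 4 * (2 * τ) * (π - -π) :=
          abs_deriv_le_of_abs_le_one hu hunpi heq hK hu1 x hx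
      _ ≤ 4 * exp (12 * π) * τ := by nlinarith [mul_le_mul_of_nonneg_right hC hτ0.le]
end

section
/- Let C > 0, T ≥ 8C, and let Φ : [0, T] → [0, ∞) be Lebesgue integrable and satisfy ∫_{t₁}^{t₂} Φ(s) ds ≤ C [Φ(t₁) + Φ(t₂)] for all 0 ≤ t₁ < t₂ ≤ T. Then for every t ∈ [0, T − 4C], (1/(4C)) ∫_t^{t + 4C} Φ(s) ds ≤ 4 (e^{−ω t} + e^{−ω (T − t)}) [Φ(0) + Φ(T)], where ω = (log 2)/(4C). -/
open Real MeasureTheory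

/-- If a nonnegative integrable function `Φ` satisfies
`∫_{t₁}^{t₂} Φ ≤ C (Φ(t₁) + Φ(t₂))` for all `t₁ < t₂` in `[0, T]`, then its sliding
averages decay exponentially from both endpoints. -/
theorem phi_exponential_decay (C T : ℝ) (hC : 0 < C) (hT : 8 * C ≤ T)
    (Φ : ℝ → ℝ) (hΦnn : ∀ t ∈ Set.Icc 0 T, 0 ≤ Φ t)
    (hΦint : IntegrableOn Φ (Set.Icc 0 T))
    (h : ∀ t₁ t₂ : ℝ, 0 ≤ t₁ → t₁ < t₂ → t₂ ≤ T →
      (∫ s in t₁..t₂, Φ s) ≤ C * (Φ t₁ + Φ t₂)) :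
    ∀ t ∈ Set.Icc 0 (T - 4 * C),
      (1 / (4 * C)) * ∫ s in t..(t + 4 * C), Φ s ≤
        4 * (Real.exp (-(Real.log 2 / (4 * C)) * t) +
            Real.exp (-(Real.log 2 / (4 * C)) * (T - t))) * (Φ 0 + Φ T) := by
  have hC4 : (0:ℝ) < 4 * C := by linarith
  have hT0 : (0:ℝ) < T := by linarith
  -- interval integrability
  have hii : ∀ a b : ℝ, 0 ≤ a → a ≤ b → b ≤ T → IntervalIntegrable Φ volume a b := by
    intro a b ha hab hb
    have : IntegrableOn Φ (Set.uIcc a b) := by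
      rw [Set.uIcc_of_le hab]
      exact hΦint.mono_set (Set.Icc_subset_Icc ha hb)
    exact this.intervalIntegrable
  -- a.e. nonnegativity
  have hnn : 0 ≤ᵐ[volume.restrict (Set.Ioc (0:ℝ) T)] Φ := by
    filter_upwards [ae_restrict_mem measurableSet_Ioc] with x hx
    exact hΦnn x ⟨hx.1.le, hx.2⟩
  have hnn' : ∀ u v : ℝ, 0 ≤ u → v ≤ T → 0 ≤ᵐ[volume.restrict (Set.Ioc u v)] Φ :=
    fun u v hu hv => ae_restrict_of_ae_restrict_of_subset (Set.Ioc_subset_Ioc hu hv) hnn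
  -- monotonicity of the integral in the interval
  have hmono : ∀ a b c d : ℝ, 0 ≤ a → a ≤ c → c ≤ d → d ≤ b → b ≤ T →
      (∫ s in c..d, Φ s) ≤ ∫ s in a..b, Φ s := by
    intro a b c d ha hac hcd hdb hb
    exact intervalIntegral.integral_mono_interval hac hcd hdb (hnn' a b ha hb)
      (hii a b ha (by linarith) hb)
  have hgnn : ∀ a b : ℝ, 0 ≤ a → a ≤ b → b ≤ T → 0 ≤ ∫ s in a..b, Φ s := by
    intro a b ha hab hb
    exact intervalIntegral.integral_nonneg hab (fun x hx => hΦnn x ⟨ha.trans hx.1, hx.2.trans hb⟩)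
  have hΦ0 : 0 ≤ Φ 0 := hΦnn 0 ⟨le_rfl, hT0.le⟩
  have hΦT : 0 ≤ Φ T := hΦnn T ⟨hT0.le, le_rfl⟩
  -- global bound
  have hB : ∀ a : ℝ, 0 ≤ a → a + 4 * C ≤ T → (∫ s in a..(a + 4 * C), Φ s) ≤ C * (Φ 0 + Φ T) := by
    intro a ha haT
    calc (∫ s in a..(a + 4 * C), Φ s) ≤ ∫ s in (0:ℝ)..T, Φ s :=
          hmono 0 T a (a + 4 * C) le_rfl ha (by linarith) haT le_rfl
      _ ≤ C * (Φ 0 + Φ T) := h 0 T le_rfl hT0 le_rfl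
  -- existence of a point below the average on each window
  have hpt : ∀ a : ℝ, 0 ≤ a → a + 4 * C ≤ T →
      ∃ τ ∈ Set.Icc a (a + 4 * C), Φ τ * (4 * C) ≤ ∫ s in a..(a + 4 * C), Φ s := by
    intro a ha haT
    have hvol : volume (Set.Icc a (a + 4 * C)) = ENNReal.ofReal (4 * C) := by
      rw [Real.volume_Icc]; congr 1; ring
    have hne : volume (Set.Icc a (a + 4 * C)) ≠ 0 := by
      rw [hvol]; simp [ENNReal.ofReal_eq_zero]; linarith
    have hfin : volume (Set.Icc a (a + 4 * C)) ≠ ⊤ := by rw [hvol]; exact ENNReal.ofReal_ne_top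
    have hint : IntegrableOn Φ (Set.Icc a (a + 4 * C)) :=
      hΦint.mono_set (Set.Icc_subset_Icc ha haT)
    obtain ⟨τ, hτm, hτ⟩ := exists_le_setAverage hne hfin hint
    refine ⟨τ, hτm, ?_⟩
    have havg : (⨍ x in Set.Icc a (a + 4 * C), Φ x) = (∫ s in a..(a + 4 * C), Φ s) / (4 * C) := by
      rw [setAverage_eq, measureReal_def, hvol, ENNReal.toReal_ofReal hC4.le,
        MeasureTheory.integral_Icc_eq_integral_Ioc,
        ← intervalIntegral.integral_of_le (by linarith : a ≤ a + 4 * C), smul_eq_mul]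
      ring
    rw [havg] at hτ
    calc Φ τ * (4 * C) ≤ ((∫ s in a..(a + 4 * C), Φ s) / (4 * C)) * (4 * C) := by
          exact mul_le_mul_of_nonneg_right hτ hC4.le
      _ = ∫ s in a..(a + 4 * C), Φ s := by field_simp
  -- halving step
  have hstep : ∀ a : ℝ, 4 * C ≤ a → a + 8 * C ≤ T →
      (∫ s in a..(a + 4 * C), Φ s) ≤
        max (∫ s in (a - 4 * C)..((a - 4 * C) + 4 * C), Φ s)
            (∫ s in (a + 4 * C)..((a + 4 * C) + 4 * C), Φ s) / 2 := by
    intro a ha haT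
    obtain ⟨τ₁, hτ₁m, hτ₁⟩ := hpt (a - 4 * C) (by linarith) (by linarith)
    obtain ⟨τ₂, hτ₂m, hτ₂⟩ := hpt (a + 4 * C) (by linarith) (by linarith)
    have hτ₁a : τ₁ ≤ a := by have := hτ₁m.2; linarith
    have hτ₁0 : 0 ≤ τ₁ := by have := hτ₁m.1; linarith
    have haτ₂ : a + 4 * C ≤ τ₂ := hτ₂m.1
    have hτ₂T : τ₂ ≤ T := by have := hτ₂m.2; linarith
    have h12 : τ₁ < τ₂ := by linarith
    set gm := ∫ s in (a - 4 * C)..((a - 4 * C) + 4 * C), Φ s with hgm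
    set gp := ∫ s in (a + 4 * C)..((a + 4 * C) + 4 * C), Φ s with hgp
    have hle1 : gm ≤ max gm gp := le_max_left _ _
    have hle2 : gp ≤ max gm gp := le_max_right _ _
    calc (∫ s in a..(a + 4 * C), Φ s) ≤ ∫ s in τ₁..τ₂, Φ s :=
          hmono τ₁ τ₂ a (a + 4 * C) hτ₁0 hτ₁a (by linarith) haτ₂ hτ₂T
      _ ≤ C * (Φ τ₁ + Φ τ₂) := h τ₁ τ₂ hτ₁0 h12 hτ₂T
      _ ≤ max gm gp / 2 := by nlinarith [hτ₁, hτ₂]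
  -- main induction: decay by powers of 2
  have key : ∀ j : ℕ, ∀ a : ℝ, 4 * C * j ≤ a → a + 4 * C * (j + 1) ≤ T →
      (∫ s in a..(a + 4 * C), Φ s) ≤ C * (Φ 0 + Φ T) / 2 ^ j := by
    intro j
    induction j with
    | zero =>
      intro a ha haT
      norm_num at ha haT ⊢
      exact hB a ha haT
    | succ j ih =>
      intro a ha haT
      push_cast at ha haT
      have hj0 : (0:ℝ) ≤ C * (j:ℝ) := mul_nonneg hC.le (Nat.cast_nonneg j)
      have h1 : 4 * C ≤ a := by nlinarith
      have h2 : a + 8 * C ≤ T := by nlinarith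
      have hL := ih (a - 4 * C) (by push_cast; linarith) (by push_cast; linarith)
      have hR := ih (a + 4 * C) (by push_cast; nlinarith) (by push_cast; linarith)
      have hm := hstep a h1 h2
      have hmax : max (∫ s in (a - 4 * C)..((a - 4 * C) + 4 * C), Φ s)
          (∫ s in (a + 4 * C)..((a + 4 * C) + 4 * C), Φ s) ≤ C * (Φ 0 + Φ T) / 2 ^ j :=
        max_le hL hR
      calc (∫ s in a..(a + 4 * C), Φ s) ≤ _ / 2 := hm
        _ ≤ (C * (Φ 0 + Φ T) / 2 ^ j) / 2 := by linarith
        _ = C * (Φ 0 + Φ T) / 2 ^ (j + 1) := by rw [pow_succ]; ring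
  -- conclusion
  intro t ht
  obtain ⟨ht0, htT⟩ := ht
  set S := Φ 0 + Φ T with hSdef
  have hS : 0 ≤ S := by positivity
  set j : ℕ := min (Nat.floor (t / (4 * C))) (Nat.floor ((T - t) / (4 * C)) - 1) with hjdef
  have hfl1 : (1:ℕ) ≤ Nat.floor ((T - t) / (4 * C)) := by
    apply Nat.le_floor
    rw [le_div_iff₀ hC4]
    push_cast; linarith
  -- j ≤ t/(4C)
  have hj1 : (j:ℝ) ≤ t / (4 * C) := by
    have : j ≤ Nat.floor (t / (4 * C)) := min_le_left _ _
    exact (Nat.le_floor_iff (by positivity)).mp this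
  -- j+1 ≤ (T−t)/(4C)
  have hj2 : (j:ℝ) + 1 ≤ (T - t) / (4 * C) := by
    have h1 : j + 1 ≤ Nat.floor ((T - t) / (4 * C)) := by
      have := min_le_right (Nat.floor (t / (4 * C))) (Nat.floor ((T - t) / (4 * C)) - 1)
      omega
    have := (Nat.le_floor_iff (by
      rw [le_div_iff₀ hC4]; push_cast; linarith : (0:ℝ) ≤ (T - t) / (4 * C))).mp h1
    push_cast at this; linarith
  have hjt : 4 * C * (j:ℝ) ≤ t := by
    have := (le_div_iff₀ hC4).mp hj1
    linarith
  have htj : t + 4 * C * ((j:ℝ) + 1) ≤ T := by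
    have := (le_div_iff₀ hC4).mp hj2
    linarith
  have hkey := key j t hjt htj
  set g := ∫ s in t..(t + 4 * C), Φ s with hgdef
  have hg0 : 0 ≤ g := hgnn t (t + 4 * C) ht0 (by linarith) (by linarith)
  set E1 := Real.exp (-(Real.log 2 / (4 * C)) * t) with hE1def
  set E2 := Real.exp (-(Real.log 2 / (4 * C)) * (T - t)) with hE2def
  have hlog2 : 0 < Real.log 2 := Real.log_pos (by norm_num)
  have hexp : ∀ x : ℝ, ∀ n : ℕ, x / (4 * C) ≤ n →
      (1/2:ℝ) ^ n ≤ Real.exp (-(Real.log 2 / (4 * C)) * x) := by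
    intro x n hxn
    have h1 : ((1:ℝ)/2) ^ n = Real.exp ((n:ℝ) * (-Real.log 2)) := by
      rw [Real.exp_nat_mul, Real.exp_neg, Real.exp_log (by norm_num : (0:ℝ) < 2), one_div]
    rw [h1]
    apply Real.exp_le_exp.mpr
    have h2 : (n:ℝ) * (-Real.log 2) ≤ (x / (4 * C)) * (-Real.log 2) :=
      mul_le_mul_of_nonpos_right hxn (by linarith)
    calc (n:ℝ) * (-Real.log 2) ≤ (x / (4 * C)) * (-Real.log 2) := h2
      _ = -(Real.log 2 / (4 * C)) * x := by ring
  have hp2 : ((1:ℝ)/2) ^ j = ((2:ℝ) ^ j)⁻¹ := by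
    rw [one_div, inv_pow]
  -- key quantitative bound: (1/2)^j / 4 ≤ 4 * (E1 + E2)
  have hquant : ((1:ℝ)/2) ^ j / 4 ≤ 4 * (E1 + E2) := by
    have hE1nn : 0 ≤ E1 := (Real.exp_pos _).le
    have hE2nn : 0 ≤ E2 := (Real.exp_pos _).le
    rcases le_total (Nat.floor (t / (4 * C))) (Nat.floor ((T - t) / (4 * C)) - 1) with hc | hc
    · -- j = ⌊t/(4C)⌋, so t/(4C) < j + 1
      have hje : j = Nat.floor (t / (4 * C)) := min_eq_left hc
      have hlt : t / (4 * C) < (j:ℝ) + 1 := by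
        rw [hje]; push_cast; exact Nat.lt_floor_add_one _
      have := hexp t (j + 1) (by push_cast; linarith)
      rw [pow_succ] at this
      linarith
    · -- j = ⌊(T−t)/(4C)⌋ − 1, so (T−t)/(4C) < j + 2
      have hje : j = Nat.floor ((T - t) / (4 * C)) - 1 := min_eq_right hc
      have hfl : Nat.floor ((T - t) / (4 * C)) = j + 1 := by omega
      have hlt : (T - t) / (4 * C) < (j:ℝ) + 2 := by
        have := Nat.lt_floor_add_one ((T - t) / (4 * C))
        rw [hfl] at this; push_cast at this; linarith
      have := hexp (T - t) (j + 2) (by push_cast; linarith)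
      rw [pow_succ, pow_succ] at this
      linarith
  -- put it together
  have step1 : (1 / (4 * C)) * g ≤ S * ((1/2:ℝ) ^ j) / 4 := by
    rw [hp2]
    rw [one_div, inv_mul_le_iff₀ hC4]
    have h2j : (0:ℝ) < 2 ^ j := by positivity
    calc g ≤ C * S / 2 ^ j := hkey
      _ = 4 * C * (S * ((2:ℝ) ^ j)⁻¹ / 4) := by field_simp
  calc (1 / (4 * C)) * g ≤ S * ((1/2:ℝ) ^ j) / 4 := step1
    _ ≤ 4 * (E1 + E2) * S := by nlinarith [hquant, hS, mul_le_mul_of_nonneg_left hquant hS]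
end

section
/- Let t₁ < t₂ be real numbers and let f : [t₁, t₂] → [0, ∞) be Lipschitz continuous with Lipschitz constant L. Then for every t ∈ [t₁, t₂], f(t)² ≤ 2 L ∫_{t₁}^{t₂} f(s) ds + ( (t₂ − t₁)^{−1} ∫_{t₁}^{t₂} f(s) ds )². -/
open Real

/-- Auxiliary: a linear lower bound on `f` on `[p,q]` gives a lower bound on the integral. -/
lemma integral_ge_of_linear_le (f : ℝ → ℝ) (p q α k : ℝ) (hpq : p ≤ q)
    (hint : IntervalIntegrable f MeasureTheory.volume p q)
    (hle : ∀ s ∈ Set.Icc p q, α + k * s ≤ f s) :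
    α * (q - p) + k * (q ^ 2 - p ^ 2) / 2 ≤ ∫ s in p..q, f s := by
  have h1 : (∫ s in p..q, (α + k * s)) ≤ ∫ s in p..q, f s := by
    apply intervalIntegral.integral_mono_on hpq _ hint hle
    exact (Continuous.intervalIntegrable (by continuity) p q)
  have h2 : (∫ s in p..q, (α + k * s)) = α * (q - p) + k * (q ^ 2 - p ^ 2) / 2 := by
    rw [intervalIntegral.integral_add (intervalIntegrable_const)
      ((Continuous.intervalIntegrable (by continuity) p q)),
      intervalIntegral.integral_const, intervalIntegral.integral_const_mul, integral_id,
      smul_eq_mul]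
    ring
  linarith

/-- For a nonnegative `L`-Lipschitz function `f` on `[t₁, t₂]`,
`f(t)² ≤ 2 L ∫ f + ((t₂ - t₁)⁻¹ ∫ f)²` for every `t ∈ Set.Icc t₁ t₂`. -/
theorem sq_le_of_lipschitz (t₁ t₂ L : ℝ) (h12 : t₁ < t₂) (hL : 0 ≤ L)
    (f : ℝ → ℝ) (hnn : ∀ t ∈ Set.Icc t₁ t₂, 0 ≤ f t)
    (hLip : ∀ s ∈ Set.Icc t₁ t₂, ∀ s' ∈ Set.Icc t₁ t₂, |f s - f s'| ≤ L * |s - s'|) :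
    ∀ t ∈ Set.Icc t₁ t₂,
      (f t) ^ 2 ≤ 2 * L * (∫ s in t₁..t₂, f s) +
        ((t₂ - t₁)⁻¹ * ∫ s in t₁..t₂, f s) ^ 2 := by
  intro t ht
  have hT : (0:ℝ) < t₂ - t₁ := by linarith
  -- continuity of f on [t₁,t₂]
  have hcont : ContinuousOn f (Set.Icc t₁ t₂) := by
    refine LipschitzOnWith.continuousOn (K := L.toNNReal)
      (LipschitzOnWith.of_dist_le_mul (fun x hx y hy => ?_))
    rw [Real.dist_eq, Real.dist_eq, Real.coe_toNNReal L hL]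
    exact hLip x hx y hy
  have hint : IntervalIntegrable f MeasureTheory.volume t₁ t₂ := by
    apply ContinuousOn.intervalIntegrable
    rwa [Set.uIcc_of_le h12.le]
  -- nonnegativity of the integral and average bound by the minimum
  obtain ⟨s₀, hs₀, hmin⟩ := isCompact_Icc.exists_isMinOn (Set.nonempty_Icc.2 h12.le) hcont
  set m := f s₀ with hm
  have hm0 : 0 ≤ m := hnn s₀ hs₀
  have hma : m ≤ f t := hmin ht
  -- the min is below the average: m * (t₂ - t₁) ≤ ∫ f
  have hmavg : m * (t₂ - t₁) ≤ ∫ s in t₁..t₂, f s := by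
    have : (∫ s in t₁..t₂, (m : ℝ)) ≤ ∫ s in t₁..t₂, f s := by
      apply intervalIntegral.integral_mono_on h12.le intervalIntegrable_const hint
      exact fun x hx => hmin hx
    rwa [intervalIntegral.integral_const, smul_eq_mul, mul_comm] at this
  have hintnn : 0 ≤ ∫ s in t₁..t₂, f s := le_trans (by positivity) hmavg
  have hmsq : m ^ 2 ≤ ((t₂ - t₁)⁻¹ * ∫ s in t₁..t₂, f s) ^ 2 := by
    have h1 : m ≤ (t₂ - t₁)⁻¹ * ∫ s in t₁..t₂, f s := by
      rw [inv_mul_eq_div, le_div_iff₀ hT]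
      linarith
    exact pow_le_pow_left₀ hm0 h1 2
  rcases eq_or_lt_of_le hL with hL0 | hLpos
  · -- L = 0 : f is constant
    have hconst : ∀ s ∈ Set.Icc t₁ t₂, f s = f t := by
      intro s hs
      have h := hLip s hs t ht
      rw [← hL0, zero_mul] at h
      have h2 := abs_nonneg (f s - f t)
      have habs : |f s - f t| = 0 := le_antisymm h h2
      have := abs_eq_zero.mp habs
      linarith
    have hI : (∫ s in t₁..t₂, f s) = f t * (t₂ - t₁) := by
      rw [intervalIntegral.integral_congr (g := fun _ => f t)
        (by intro s hs; rw [Set.uIcc_of_le h12.le] at hs; exact hconst s hs),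
        intervalIntegral.integral_const, smul_eq_mul, mul_comm]
    rw [hI, ← hL0]
    have : (t₂ - t₁)⁻¹ * (f t * (t₂ - t₁)) = f t := by
      field_simp
    rw [this]
    ring_nf
    nlinarith [sq_nonneg (f t)]
  · -- L > 0
    set a := f t with ha
    set c := (a - m) / L with hc
    have hc0 : 0 ≤ c := div_nonneg (by linarith) hLpos.le
    have hLc : L * c = a - m := by rw [hc]; field_simp [hLpos.ne']
    -- key: ∫ f ≥ (a² - m²)/(2L)
    have key : a ^ 2 - m ^ 2 ≤ 2 * L * ∫ s in t₁..t₂, f s := by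
      rcases le_total s₀ t with hst | hst
      · -- s₀ ≤ t : triangle on [t - c, t]
        have hcd : c ≤ t - s₀ := by
          rw [div_le_iff₀ hLpos]
          have := hLip t ht s₀ hs₀
          rw [abs_of_nonneg (by linarith : (0:ℝ) ≤ t - s₀)] at this
          calc a - m ≤ |f t - f s₀| := le_abs_self _
            _ ≤ L * (t - s₀) := this
            _ = (t - s₀) * L := mul_comm _ _
        have hp1 : t₁ ≤ t - c := by linarith [hs₀.1]
        have hq2 : t - c ≤ t := by linarith
        -- split integral
        have hi1 : IntervalIntegrable f MeasureTheory.volume t₁ (t - c) :=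
          hint.mono_set (by
              rw [Set.uIcc_of_le h12.le, Set.uIcc_of_le hp1]
              exact Set.Icc_subset_Icc le_rfl (by linarith [ht.2]))
        have hi2 : IntervalIntegrable f MeasureTheory.volume (t - c) t :=
          hint.mono_set (by
              rw [Set.uIcc_of_le h12.le, Set.uIcc_of_le hq2]
              exact Set.Icc_subset_Icc hp1 ht.2)
        have hi3 : IntervalIntegrable f MeasureTheory.volume t t₂ :=
          hint.mono_set (by
              rw [Set.uIcc_of_le h12.le, Set.uIcc_of_le ht.2]
              exact Set.Icc_subset_Icc ht.1 le_rfl)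
        have hsplit : (∫ s in t₁..(t - c), f s) + (∫ s in (t - c)..t, f s)
            + (∫ s in t..t₂, f s) = ∫ s in t₁..t₂, f s := by
          rw [intervalIntegral.integral_add_adjacent_intervals hi1 hi2]
          exact intervalIntegral.integral_add_adjacent_intervals
            (hi1.trans hi2) hi3
        have hnn1 : 0 ≤ ∫ s in t₁..(t - c), f s :=
          intervalIntegral.integral_nonneg hp1
            (fun u hu => hnn u ⟨hu.1, le_trans hu.2 (by linarith [ht.2])⟩)
        have hnn3 : 0 ≤ ∫ s in t..t₂, f s :=
          intervalIntegral.integral_nonneg ht.2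
            (fun u hu => hnn u ⟨le_trans ht.1 hu.1, hu.2⟩)
        have htri : (a - L * t) * (t - (t - c)) + L * (t ^ 2 - (t - c) ^ 2) / 2
            ≤ ∫ s in (t - c)..t, f s := by
          apply integral_ge_of_linear_le f (t - c) t (a - L * t) L hq2 hi2
          intro s hs
          have hsI : s ∈ Set.Icc t₁ t₂ := ⟨le_trans hp1 hs.1, le_trans hs.2 ht.2⟩
          have := hLip t ht s hsI
          rw [abs_of_nonneg (by linarith [hs.2] : (0:ℝ) ≤ t - s)] at this
          have h' : a - f s ≤ L * (t - s) := le_trans (le_abs_self _) this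
          nlinarith
        nlinarith [htri, hsplit, hnn1, hnn3, hLc]
      · -- t ≤ s₀ : triangle on [t, t + c]
        have hcd : c ≤ s₀ - t := by
          rw [div_le_iff₀ hLpos]
          have := hLip t ht s₀ hs₀
          rw [abs_of_nonpos (by linarith : t - s₀ ≤ (0:ℝ))] at this
          calc a - m ≤ |f t - f s₀| := le_abs_self _
            _ ≤ L * -(t - s₀) := this
            _ = (s₀ - t) * L := by ring
        have hq2 : t + c ≤ t₂ := by linarith [hs₀.2]
        have hp1 : t ≤ t + c := by linarith
        have hi1 : IntervalIntegrable f MeasureTheory.volume t₁ t :=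
          hint.mono_set (by
              rw [Set.uIcc_of_le h12.le, Set.uIcc_of_le ht.1]
              exact Set.Icc_subset_Icc le_rfl ht.2)
        have hi2 : IntervalIntegrable f MeasureTheory.volume t (t + c) :=
          hint.mono_set (by
              rw [Set.uIcc_of_le h12.le, Set.uIcc_of_le hp1]
              exact Set.Icc_subset_Icc ht.1 hq2)
        have hi3 : IntervalIntegrable f MeasureTheory.volume (t + c) t₂ :=
          hint.mono_set (by
              rw [Set.uIcc_of_le h12.le, Set.uIcc_of_le hq2]
              exact Set.Icc_subset_Icc (by linarith [ht.1]) le_rfl)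
        have hsplit : (∫ s in t₁..t, f s) + (∫ s in t..(t + c), f s)
            + (∫ s in (t + c)..t₂, f s) = ∫ s in t₁..t₂, f s := by
          rw [intervalIntegral.integral_add_adjacent_intervals hi1 hi2]
          exact intervalIntegral.integral_add_adjacent_intervals
            (hi1.trans hi2) hi3
        have hnn1 : 0 ≤ ∫ s in t₁..t, f s :=
          intervalIntegral.integral_nonneg ht.1
            (fun u hu => hnn u ⟨hu.1, le_trans hu.2 ht.2⟩)
        have hnn3 : 0 ≤ ∫ s in (t + c)..t₂, f s :=
          intervalIntegral.integral_nonneg hq2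
            (fun u hu => hnn u ⟨le_trans (by linarith [ht.1]) hu.1, hu.2⟩)
        have htri : (a + L * t) * ((t + c) - t) + (-L) * ((t + c) ^ 2 - t ^ 2) / 2
            ≤ ∫ s in t..(t + c), f s := by
          apply integral_ge_of_linear_le f t (t + c) (a + L * t) (-L) hp1 hi2
          intro s hs
          have hsI : s ∈ Set.Icc t₁ t₂ := ⟨le_trans ht.1 hs.1, le_trans hs.2 hq2⟩
          have := hLip t ht s hsI
          rw [abs_of_nonpos (by linarith [hs.1] : t - s ≤ (0:ℝ))] at this
          have h' : a - f s ≤ L * (s - t) := by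
            have := le_trans (le_abs_self _) this; linarith [this]
          nlinarith
        nlinarith [htri, hsplit, hnn1, hnn3, hLc]
    linarith [key, hmsq]
end
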